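/- arXiv:1710.08402 — 12 statements merged into one kernel-verified Lean document; each statement's English description precedes it below -/
import Mathlib

section
/- Let f : ℝ^d → ℝ be a differentiable function whose infimum f* is attained. If f satisfies the Polyak–Łojasiewicz (PL) condition with parameter μ > 0, then f satisfies the quadratic growth (QG) condition with some parameter ν > 0; that is, for every x ∈ ℝ^d there exists a global minimizer x_p of f with f(x) − f* ≥ (ν/2)·‖x − x_p‖². -/
/-!
Under PL, `h = √(f - f*)` has slope `‖∇f‖ / (2h) ≥ √μ / 2` wherever `h > 0`. Ekeland's variational
principle applied to `h` at `x` with constant `c = √μ / 4` yields `xp` with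
`c ‖x - xp‖ ≤ h x - h xp` at which `h + c ‖· - xp‖` is minimal, so the derivative of `h` at `xp`
would have norm at most `c < √μ / 2`; hence `h xp = 0`, and squaring gives QG with `ν = μ / 8`.
-/

open Filter Topology Set

section Ekeland

variable {X : Type*} [MetricSpace X] {g : X → ℝ} {c ε : ℝ}

def ekelandSet (g : X → ℝ) (c : ℝ) (y : X) : Set X := {z | g z + c * dist z y ≤ g y}

lemma self_mem_ekelandSet (y : X) : y ∈ ekelandSet g c y := by
  simp [ekelandSet]

lemma ekelandSet_subset (hc : 0 ≤ c) {y z : X} (hz : z ∈ ekelandSet g c y) :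
    ekelandSet g c z ⊆ ekelandSet g c y := fun w hw => by
  simp only [ekelandSet, mem_ofPred_eq] at *
  nlinarith [dist_triangle w z y]

lemma isClosed_ekelandSet (hg : LowerSemicontinuous g) (y : X) :
    IsClosed (ekelandSet g c y) :=
  (hg.add (continuous_const.mul (continuous_id.dist continuous_const)).lowerSemicontinuous)
    |>.isClosed_preimage (g y)

lemma exists_mem_ekelandSet_forall_le_add (hbdd : BddBelow (range g)) (hε : 0 < ε) (y : X) :
    ∃ w ∈ ekelandSet g c y, ∀ z ∈ ekelandSet g c y, g w ≤ g z + ε := by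
  have hne : (g '' ekelandSet g c y).Nonempty := ⟨g y, y, self_mem_ekelandSet y, rfl⟩
  have hbdd' : BddBelow (g '' ekelandSet g c y) := hbdd.mono (image_subset_range _ _)
  obtain ⟨_, ⟨w, hw, rfl⟩, hlt⟩ := exists_lt_of_csInf_lt hne (lt_add_of_pos_right _ hε)
  exact ⟨w, hw, fun z hz => by linarith [csInf_le hbdd' (mem_image_of_mem g hz)]⟩

lemma mul_dist_le_of_mem_ekelandSet (hc : 0 ≤ c) {y w z : X} (hw : w ∈ ekelandSet g c y)
    (hmin : ∀ z ∈ ekelandSet g c y, g w ≤ g z + ε) (hz : z ∈ ekelandSet g c w) :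
    c * dist z w ≤ ε := by
  have := hmin z (ekelandSet_subset hc hw hz)
  simp only [ekelandSet, mem_ofPred_eq] at hz
  linarith

lemma exists_seq_ekelandSet (hbdd : BddBelow (range g)) (hc : 0 ≤ c) (x : X) :
    ∃ u : ℕ → X, u 0 ∈ ekelandSet g c x ∧ Antitone (fun n => ekelandSet g c (u n)) ∧
      ∀ n, ∀ z ∈ ekelandSet g c (u n), c * dist z (u n) ≤ (1 / 2) ^ n := by
  choose next hnext hmin using fun (n : ℕ) (y : X) =>
    exists_mem_ekelandSet_forall_le_add (c := c) hbdd (pow_pos (one_half_pos (α := ℝ)) n) y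
  let u : ℕ → X := fun n => Nat.rec (next 0 x) (fun k y => next (k + 1) y) n
  refine ⟨u, hnext 0 x, antitone_nat_of_succ_le fun n => ekelandSet_subset hc (hnext _ _),
    fun n z hz => ?_⟩
  cases n with
  | zero => exact mul_dist_le_of_mem_ekelandSet hc (hnext 0 x) (hmin 0 x) hz
  | succ n => exact mul_dist_le_of_mem_ekelandSet hc (hnext _ _) (hmin _ _) hz

/-- Ekeland's variational principle: the nested closed sets `ekelandSet g c (u n)` shrink to the
point `y`. -/
theorem LowerSemicontinuous.exists_forall_le_add_mul_dist [CompleteSpace X]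
    (hg : LowerSemicontinuous g) (hbdd : BddBelow (range g)) (hc : 0 < c) (x : X) :
    ∃ y, g y + c * dist y x ≤ g x ∧ ∀ z, g y ≤ g z + c * dist z y := by
  obtain ⟨u, hu0, hanti, hsmall⟩ := exists_seq_ekelandSet hbdd hc.le x
  have hdist : ∀ n, ∀ z ∈ ekelandSet g c (u n), dist z (u n) ≤ (1 / 2) ^ n / c :=
    fun n z hz => (le_div_iff₀' hc).2 (hsmall n z hz)
  have hrate : Tendsto (fun n : ℕ => ((1 : ℝ) / 2) ^ n / c) atTop (𝓝 0) := by
    simpa using (tendsto_pow_atTop_nhds_zero_of_lt_one (by norm_num) one_half_lt_one).div_const c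
  have hlim : ∀ z, (∀ n, z ∈ ekelandSet g c (u n)) → Tendsto u atTop (𝓝 z) := fun z hz =>
    tendsto_iff_dist_tendsto_zero.2 <| squeeze_zero (fun _ => dist_nonneg)
      (fun n => by rw [dist_comm]; exact hdist n z (hz n)) hrate
  have hcauchy : CauchySeq u := by
    refine cauchySeq_of_le_tendsto_0 (fun N => 2 * ((1 / 2) ^ N / c))
      (fun n m N hn hm => ?_) (by simpa using hrate.const_mul 2)
    have h1 := hdist N (u n) (hanti hn (self_mem_ekelandSet _))
    have h2 := hdist N (u m) (hanti hm (self_mem_ekelandSet _))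
    linarith [dist_triangle_right (u n) (u m) (u N)]
  obtain ⟨y, hy⟩ := cauchySeq_tendsto_of_complete hcauchy
  have hyS : ∀ n, y ∈ ekelandSet g c (u n) := fun n =>
    (isClosed_ekelandSet hg _).mem_of_tendsto hy
      (eventually_atTop.2 ⟨n, fun m hm => hanti hm (self_mem_ekelandSet _)⟩)
  have hsingleton : ∀ z ∈ ekelandSet g c y, z = y := fun z hz =>
    tendsto_nhds_unique (hlim z fun n => ekelandSet_subset hc.le (hyS n) hz) hy
  refine ⟨y, ekelandSet_subset hc.le hu0 (hyS 0), fun z => ?_⟩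
  by_cases hz : z ∈ ekelandSet g c y
  · simp [hsingleton z hz]
  · exact (lt_of_not_ge hz).le

end Ekeland

section Derivative

variable {E : Type*} [NormedAddCommGroup E] [NormedSpace ℝ E]

lemma HasFDerivAt.norm_le_of_forall_le_add_mul_norm {g : E → ℝ} {L : E →L[ℝ] ℝ} {y : E} {c : ℝ}
    (hg : HasFDerivAt g L y) (hc : 0 ≤ c) (h : ∀ z, g y ≤ g z + c * ‖z - y‖) : ‖L‖ ≤ c := by
  have key : ∀ v, -(c * ‖v‖) ≤ L v := by
    intro v
    have hline : HasDerivAt (fun t : ℝ => g (y + t • v)) (L v) 0 := by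
      have := ((hasDerivAt_id (0 : ℝ)).smul_const v).const_add y
      simp only [id, one_smul] at this
      exact (by simpa using hg : HasFDerivAt g L (y + (0 : ℝ) • v)).comp_hasDerivAt 0 this
    have hslope : Tendsto (slope (fun t : ℝ => g (y + t • v)) 0) (𝓝[>] 0) (𝓝 (L v)) :=
      (hasDerivAt_iff_tendsto_slope.1 hline).mono_left (nhdsWithin_mono 0 fun _ ht => ne_of_gt ht)
    refine ge_of_tendsto hslope ?_
    filter_upwards [self_mem_nhdsWithin] with t (ht : 0 < t)
    have := h (y + t • v)
    rw [add_sub_cancel_left, norm_smul, Real.norm_of_nonneg ht.le] at this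
    rw [slope_def_field, zero_smul, add_zero, sub_zero, le_div_iff₀ ht]
    linarith
  refine L.opNorm_le_bound hc fun v => abs_le.2 ⟨key v, ?_⟩
  simpa [norm_neg] using key (-v)

end Derivative

section PL

variable {E : Type*} [NormedAddCommGroup E] [InnerProductSpace ℝ E] [CompleteSpace E]

lemma eq_of_pl_of_forall_sqrt_sub_le {f : E → ℝ} {f' : E} {fstar μ c : ℝ} {y : E}
    (hf : HasGradientAt f f' y) (hlb : fstar ≤ f y) (hPL : μ * (f y - fstar) ≤ ‖f'‖ ^ 2)
    (hc : 0 ≤ c) (hcμ : 2 * c < √μ)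
    (hmin : ∀ z, √(f y - fstar) ≤ √(f z - fstar) + c * ‖z - y‖) : f y = fstar := by
  by_contra hne
  have hgap : 0 < f y - fstar := sub_pos.2 (lt_of_le_of_ne hlb (Ne.symm hne))
  have hsqrt : 0 < √(f y - fstar) := Real.sqrt_pos.2 hgap
  have hderiv := (hf.hasFDerivAt.sub_const fstar).sqrt hgap.ne'
  have hnorm := hderiv.norm_le_of_forall_le_add_mul_norm hc hmin
  rw [norm_smul, LinearIsometryEquiv.norm_map, Real.norm_of_nonneg (by positivity),
    one_div, inv_mul_le_iff₀ (by positivity)] at hnorm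
  have hslope : √μ * √(f y - fstar) ≤ ‖f'‖ := by
    rw [← Real.sqrt_mul' _ hgap.le, ← Real.sqrt_sq (norm_nonneg f')]
    exact Real.sqrt_le_sqrt hPL
  nlinarith

theorem exists_eq_and_mul_norm_sub_sq_le_of_pl {f : E → ℝ} {fstar μ : ℝ}
    (hdiff : Differentiable ℝ f) (hlb : ∀ x, fstar ≤ f x) (hμ : 0 < μ)
    (hPL : ∀ x, μ * (f x - fstar) ≤ ‖gradient f x‖ ^ 2) (x : E) :
    ∃ xp, f xp = fstar ∧ μ / 16 * ‖x - xp‖ ^ 2 ≤ f x - fstar := by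
  have hcont : Continuous fun z => √(f z - fstar) := (hdiff.continuous.sub continuous_const).sqrt
  have hc : 0 < √μ / 4 := by positivity
  obtain ⟨xp, hxp, hmin⟩ := hcont.lowerSemicontinuous.exists_forall_le_add_mul_dist
    ⟨0, by rintro _ ⟨z, rfl⟩; positivity⟩ hc x
  simp only [dist_eq_norm] at hxp hmin
  have hfxp : f xp = fstar :=
    eq_of_pl_of_forall_sqrt_sub_le (hdiff xp).hasGradientAt (hlb xp) (hPL xp) hc.le
      (by linarith [Real.sqrt_pos.2 hμ]) hmin
  refine ⟨xp, hfxp, ?_⟩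
  rw [hfxp, sub_self, Real.sqrt_zero, zero_add] at hxp
  have hsq := pow_le_pow_left₀ (by positivity) hxp 2
  rw [Real.sq_sqrt (sub_nonneg.2 (hlb x)), mul_pow, div_pow, Real.sq_sqrt hμ.le, norm_sub_rev] at hsq
  linarith

end PL

theorem pl_implies_qg_general (d : ℕ) (f : EuclideanSpace ℝ (Fin d) → ℝ) (fstar : ℝ) (μ : ℝ)
    (hdiff : Differentiable ℝ f)
    (hlb : ∀ x, fstar ≤ f x)
    (hμ : 0 < μ)
    (hPL : ∀ x, μ * (f x - fstar) ≤ ‖gradient f x‖ ^ 2) :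
    ∃ ν > (0 : ℝ), ∀ x, ∃ xp, f xp = fstar ∧ ν / 2 * ‖x - xp‖ ^ 2 ≤ f x - fstar := by
  refine ⟨μ / 8, by positivity, fun x => ?_⟩
  obtain ⟨xp, hxp, hgrowth⟩ := exists_eq_and_mul_norm_sub_sq_le_of_pl hdiff hlb hμ hPL x
  exact ⟨xp, hxp, by linarith⟩

/-- **PL implies QG.** If a differentiable `f : ℝ^d → ℝ` with attained infimum `fstar`
satisfies the Polyak–Łojasiewicz condition with parameter `μ > 0`, then it satisfies the
quadratic growth condition with some parameter `ν > 0`. -/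
theorem pl_implies_qg (d : ℕ) (f : EuclideanSpace ℝ (Fin d) → ℝ) (fstar : ℝ) (μ : ℝ)
    (hdiff : Differentiable ℝ f)
    (hattained : ∃ xmin, f xmin = fstar)
    (hlb : ∀ x, fstar ≤ f x)
    (hμ : 0 < μ)
    (hPL : ∀ x, μ * (f x - fstar) ≤ ‖gradient f x‖ ^ 2) :
    ∃ ν > (0 : ℝ), ∀ x, ∃ xp, f xp = fstar ∧ ν / 2 * ‖x - xp‖ ^ 2 ≤ f x - fstar :=
  pl_implies_qg_general d f fstar μ hdiff hlb hμ hPL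
end

section
/- Let f : ℝ^d → ℝ be a differentiable function whose infimum f* is attained. If f satisfies the PL condition with parameter μ > 0, then f satisfies an error bound: there exists a constant ν > 0 such that for every x ∈ ℝ^d there is a global minimizer x_p of f with ‖∇f(x)‖ ≥ ν·‖x − x_p‖. -/
/-!
Put `g = √(f - f*)`. By PL, `‖∇g‖ ≥ √μ / 2` wherever `f > f*`. Given `x`, minimise
`g z + c‖z - x‖` with `c = √μ / 4` (coercive, so a minimiser `y` exists in finite dimension).
Along every ray from `y` the function `g` then decreases with slope at most `c`, so
`‖∇g y‖ ≤ c < √μ / 2` and therefore `f y = f*`. Comparing with `z = x` gives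
`c‖y - x‖ ≤ g x ≤ ‖∇f x‖ / √μ`.
-/

open Set

section

variable {E : Type*} [NormedAddCommGroup E]

theorem Continuous.exists_forall_add_mul_norm_sub_le [ProperSpace E] {g : E → ℝ}
    (hg : Continuous g) (hbdd : BddBelow (range g)) {c : ℝ} (hc : 0 < c) (x : E) :
    ∃ y, ∀ z, g y + c * ‖y - x‖ ≤ g z + c * ‖z - x‖ := by
  obtain ⟨b, hb⟩ := hbdd
  have hcont : Continuous fun z => g z + c * ‖z - x‖ := by fun_prop
  refine hcont.exists_forall_le' x ?_
  filter_upwards [(isCompact_closedBall x ((g x - b) / c)).compl_mem_cocompact] with z hz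
  have hfar : g x - b < c * ‖z - x‖ := by
    rw [mem_compl_iff, Metric.mem_closedBall, not_le, dist_eq_norm, div_lt_iff₀ hc] at hz
    linarith
  have hgz : b ≤ g z := hb (mem_range_self z)
  rw [sub_self, norm_zero, mul_zero, add_zero]
  linarith

theorem forall_le_add_mul_norm_sub_of_forall_add_mul_norm_sub_le {g : E → ℝ} {c : ℝ}
    (hc : 0 ≤ c) {x y : E} (hy : ∀ z, g y + c * ‖y - x‖ ≤ g z + c * ‖z - x‖) (z : E) :
    g y ≤ g z + c * ‖z - y‖ := by
  have htri : ‖z - x‖ ≤ ‖z - y‖ + ‖y - x‖ := norm_sub_le_norm_sub_add_norm_sub z y x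
  nlinarith [hy z]

variable [NormedSpace ℝ E] {g : E → ℝ} {g' : StrongDual ℝ E} {y : E} {c : ℝ}

theorem HasFDerivAt.neg_apply_le_of_forall_le_add_mul_norm_sub (hg : HasFDerivAt g g' y)
    (hmin : ∀ z, g y ≤ g z + c * ‖z - y‖) (v : E) : -g' v ≤ c * ‖v‖ := by
  set φ : ℝ → ℝ := fun t => g (y + t • v) + c * (t * ‖v‖)
  have hφmin : IsMinOn φ (Ici 0) 0 := fun t (ht : 0 ≤ t) => by
    simpa [φ, norm_smul, abs_of_nonneg ht] using hmin (y + t • v)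
  have hline : HasDerivAt (fun t : ℝ => y + t • v) v 0 := by
    simpa using ((hasDerivAt_id (0 : ℝ)).smul_const v).const_add y
  have hφ : HasDerivAt φ (g' v + c * ‖v‖) 0 := by
    have hg₀ : HasFDerivAt g g' (y + (0 : ℝ) • v) := by simpa using hg
    have hpen : HasDerivAt (fun t : ℝ => c * (t * ‖v‖)) (c * ‖v‖) 0 := by
      simpa using ((hasDerivAt_id (0 : ℝ)).mul_const ‖v‖).const_mul c
    exact (hg₀.comp_hasDerivAt 0 hline).add hpen
  have hray : (1 : ℝ) ∈ posTangentConeAt (Ici 0) 0 :=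
    mem_posTangentConeAt_of_segment_subset (by simp [segment_eq_Icc, Icc_subset_Ici_self])
  have hslope :=
    hφmin.localize.hasFDerivWithinAt_nonneg hφ.hasDerivWithinAt.hasFDerivWithinAt hray
  simp only [ContinuousLinearMap.toSpanSingleton_apply, smul_eq_mul, one_mul] at hslope
  linarith

theorem HasFDerivAt.norm_le_of_forall_le_add_mul_norm_sub (hc : 0 ≤ c) (hg : HasFDerivAt g g' y)
    (hmin : ∀ z, g y ≤ g z + c * ‖z - y‖) : ‖g'‖ ≤ c := by
  refine g'.opNorm_le_bound hc fun v => abs_le.2 ⟨?_, ?_⟩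
  · linarith [hg.neg_apply_le_of_forall_le_add_mul_norm_sub hmin v]
  · simpa using hg.neg_apply_le_of_forall_le_add_mul_norm_sub hmin (-v)

end

section

variable {E : Type*} [NormedAddCommGroup E] [InnerProductSpace ℝ E] [CompleteSpace E]
  {f : E → ℝ} {m μ : ℝ}

theorem sqrt_mul_sqrt_sub_le_norm_gradient (hμ : 0 ≤ μ) {x : E}
    (hPL : μ * (f x - m) ≤ ‖gradient f x‖ ^ 2) : √μ * √(f x - m) ≤ ‖gradient f x‖ := by
  rw [← Real.sqrt_mul hμ, ← Real.sqrt_sq (norm_nonneg (gradient f x))]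
  exact Real.sqrt_le_sqrt hPL

theorem eq_of_forall_sqrt_sub_le_add_mul_norm_sub {y : E} {c : ℝ} (hf : DifferentiableAt ℝ f y)
    (hlb : m ≤ f y) (hμ : 0 ≤ μ) (hPL : μ * (f y - m) ≤ ‖gradient f y‖ ^ 2) (hc₀ : 0 ≤ c)
    (hc : c < √μ / 2) (hmin : ∀ z, √(f y - m) ≤ √(f z - m) + c * ‖z - y‖) : f y = m := by
  by_contra hne
  have hs : 0 < f y - m := sub_pos.2 (lt_of_le_of_ne hlb (Ne.symm hne))
  have hderiv : HasFDerivAt (fun z => √(f z - m)) ((1 / (2 * √(f y - m))) • fderiv ℝ f y) y :=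
    (hf.hasFDerivAt.sub_const m).sqrt hs.ne'
  have hflat := hderiv.norm_le_of_forall_le_add_mul_norm_sub hc₀ hmin
  rw [norm_smul, ← toDual_gradient, LinearIsometryEquiv.norm_map,
    Real.norm_of_nonneg (by positivity)] at hflat
  have hsteep : √μ / 2 ≤ 1 / (2 * √(f y - m)) * ‖gradient f y‖ := by
    have hsqrt : 0 < √(f y - m) := Real.sqrt_pos.2 hs
    calc √μ / 2 = 1 / (2 * √(f y - m)) * (√μ * √(f y - m)) := by field_simp
      _ ≤ 1 / (2 * √(f y - m)) * ‖gradient f y‖ := by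
        gcongr
        exact sqrt_mul_sqrt_sub_le_norm_gradient hμ hPL
  linarith

end

theorem pl_implies_error_bound_general (d : ℕ) (f : EuclideanSpace ℝ (Fin d) → ℝ) (fstar : ℝ) (μ : ℝ)
    (hdiff : Differentiable ℝ f)
    (hlb : ∀ x, fstar ≤ f x)
    (hμ : 0 < μ)
    (hPL : ∀ x, μ * (f x - fstar) ≤ ‖gradient f x‖ ^ 2) :
    ∃ ν > (0 : ℝ), ∀ x, ∃ xp, f xp = fstar ∧ ν * ‖x - xp‖ ≤ ‖gradient f x‖ := by
  have hsqrt : 0 < √μ := Real.sqrt_pos.2 hμ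
  have hc : 0 < √μ / 4 := by positivity
  refine ⟨μ / 4, by positivity, fun x => ?_⟩
  obtain ⟨y, hy⟩ := (hdiff.continuous.sub continuous_const).sqrt.exists_forall_add_mul_norm_sub_le
    (g := fun z => √(f z - fstar)) ⟨0, by rintro _ ⟨z, rfl⟩; positivity⟩ hc x
  have hprox : ∀ z, √(f y - fstar) ≤ √(f z - fstar) + √μ / 4 * ‖z - y‖ :=
    forall_le_add_mul_norm_sub_of_forall_add_mul_norm_sub_le (g := fun z => √(f z - fstar)) hc.le hy
  have hfy : f y = fstar :=
    eq_of_forall_sqrt_sub_le_add_mul_norm_sub (hdiff y) (hlb y) hμ.le (hPL y) hc.le (by linarith)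
      hprox
  refine ⟨y, hfy, ?_⟩
  have hdist : √μ / 4 * ‖y - x‖ ≤ √(f x - fstar) := by simpa [hfy] using hy x
  calc μ / 4 * ‖x - y‖ = √μ * (√μ / 4 * ‖y - x‖) := by
        rw [norm_sub_rev]; linear_combination (-‖y - x‖ / 4) * Real.mul_self_sqrt hμ.le
    _ ≤ √μ * √(f x - fstar) := by gcongr
    _ ≤ ‖gradient f x‖ := sqrt_mul_sqrt_sub_le_norm_gradient hμ.le (hPL x)

/-- **PL implies an error bound.** If a differentiable `f : ℝ^d → ℝ` with attained infimum
`fstar` satisfies the PL condition with parameter `μ > 0`, then there is `ν > 0` such that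
for every `x` there is a global minimizer `xp` with `‖∇f(x)‖ ≥ ν‖x − xp‖`. -/
theorem pl_implies_error_bound (d : ℕ) (f : EuclideanSpace ℝ (Fin d) → ℝ) (fstar : ℝ) (μ : ℝ)
    (hdiff : Differentiable ℝ f)
    (hattained : ∃ xmin, f xmin = fstar)
    (hlb : ∀ x, fstar ≤ f x)
    (hμ : 0 < μ)
    (hPL : ∀ x, μ * (f x - fstar) ≤ ‖gradient f x‖ ^ 2) :
    ∃ ν > (0 : ℝ), ∀ x, ∃ xp, f xp = fstar ∧ ν * ‖x - xp‖ ≤ ‖gradient f x‖ :=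
  pl_implies_error_bound_general d f fstar μ hdiff hlb hμ hPL
end

section
/- Let ℓ₁,…,ℓₙ : ℝ^d → ℝ (n ≥ 2) be differentiable with ‖∇ℓⱼ(w)‖ ≤ L for all w and all j. Define f_S = (1/n)·Σ_{j=1}^n ℓⱼ and, for a fixed i, f_{S^i} = (1/(n−1))·Σ_{j≠i} ℓⱼ. Suppose both f_S and f_{S^i} attain their infima f_S* and f_{S^i}*, and both satisfy the PL condition with parameter μ > 0. Let w₁* be a global minimizer of f_S and w₂* a global minimizer of f_{S^i}. Then |ℓᵢ(w₁*) − ℓᵢ(w₂*)| ≤ L²/(μn) + L²/(μ(n−1)). -/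
/-!
Since `ℓ i = n • f_S - (n - 1) • f_{S^i}`, at a minimizer of one of the two risks the gradient of
the other is a multiple of `∇ℓ i`: `∇f_S w₂ = n⁻¹ • ∇ℓ i w₂` and `∇f_{S^i} w₁ = -(n - 1)⁻¹ • ∇ℓ i w₁`,
of norms at most `L / n` and `L / (n - 1)`. The PL inequality turns these into bounds
`L² / (μ n²)` and `L² / (μ (n - 1)²)` on the suboptimality gaps `f_S w₂ - f_S w₁` and
`f_{S^i} w₁ - f_{S^i} w₂`, and `ℓ i w₂ - ℓ i w₁` is `n` times the first gap plus `n - 1` times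
the second.
-/

open Finset

section Gradient

variable {F : Type*} [NormedAddCommGroup F] [InnerProductSpace ℝ F] [CompleteSpace F]

theorem gradient_fun_mul_add_mul {f g : F → ℝ} {x : F} (hf : DifferentiableAt ℝ f x)
    (hg : DifferentiableAt ℝ g x) (a b : ℝ) :
    gradient (fun y => a * f y + b * g y) x = a • gradient f x + b • gradient g x := by
  simp only [gradient, fderiv_fun_add (hf.const_mul a) (hg.const_mul b), fderiv_const_mul hf,
    fderiv_const_mul hg, map_add, map_smul]

theorem IsLocalMin.gradient_eq_zero {f : F → ℝ} {x : F} (h : IsLocalMin f x) :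
    gradient f x = 0 := by
  simp [gradient, h.fderiv_eq_zero]

theorem gradient_eq_inv_smul_of_isLocalMin {f g h : F → ℝ} {w : F} {a b : ℝ}
    (hf : DifferentiableAt ℝ f w) (hg : DifferentiableAt ℝ g w) (hmin : IsLocalMin g w)
    (ha : a ≠ 0) (hcomb : ∀ y, f y = a * h y + b * g y) :
    gradient h w = a⁻¹ • gradient f w := by
  have hh : h = fun y => a⁻¹ * f y + (-(b / a)) * g y := by
    funext y
    rw [hcomb y]
    field_simp
    ring
  have hg0 : gradient g w = 0 := hmin.gradient_eq_zero
  rw [hh, gradient_fun_mul_add_mul hf hg, hg0, smul_zero, add_zero]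

theorem sub_le_sq_div_of_pl {f : F → ℝ} {x w : F} {μ C : ℝ} (hμ : 0 < μ)
    (hPL : μ * (f x - f w) ≤ ‖gradient f x‖ ^ 2) (hC : ‖gradient f x‖ ≤ C) :
    f x - f w ≤ C ^ 2 / μ := by
  rw [le_div_iff₀ hμ, mul_comm]
  exact hPL.trans (pow_le_pow_left₀ (norm_nonneg _) hC 2)

theorem abs_mul_sub_le_of_pl_of_isLocalMin {f g h : F → ℝ} {w w' : F} {a b μ L : ℝ}
    (hμ : 0 < μ) (hf : DifferentiableAt ℝ f w) (hg : DifferentiableAt ℝ g w)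
    (hmin : IsLocalMin g w) (ha : a ≠ 0) (hcomb : ∀ y, f y = a * h y + b * g y)
    (hL : ‖gradient f w‖ ≤ L) (hPL : μ * (h w - h w') ≤ ‖gradient h w‖ ^ 2) :
    |a| * (h w - h w') ≤ L ^ 2 / (μ * |a|) := by
  have ha' : 0 < |a| := abs_pos.2 ha
  have hC : ‖gradient h w‖ ≤ L / |a| := by
    rw [gradient_eq_inv_smul_of_isLocalMin hf hg hmin ha hcomb, norm_smul, norm_inv,
      Real.norm_eq_abs, inv_mul_eq_div]
    exact div_le_div_of_nonneg_right hL ha'.le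
  calc |a| * (h w - h w') ≤ |a| * ((L / |a|) ^ 2 / μ) :=
        mul_le_mul_of_nonneg_left (sub_le_sq_div_of_pl hμ hPL hC) ha'.le
    _ = L ^ 2 / (μ * |a|) := by field_simp

end Gradient

/-- **Pointwise stability of exact minimizers under PL (middle term bound).**
If the empirical risk `f_S` and the leave-one-out risk `f_{S^i}` both attain their infima
and satisfy the PL condition with parameter `μ > 0`, and all gradients of the losses are
bounded by `L`, then the loss `ℓ i` differs at the two minimizers by at most
`L²/(μn) + L²/(μ(n−1))`. -/
theorem pl_pointwise_stability_minimizers (d n : ℕ) (hn : 2 ≤ n) (i : Fin n) (L μ : ℝ)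
    (ℓ : Fin n → EuclideanSpace ℝ (Fin d) → ℝ)
    (hdiff : ∀ j, Differentiable ℝ (ℓ j))
    (hgrad : ∀ j w, ‖gradient (ℓ j) w‖ ≤ L)
    (hμ : 0 < μ)
    (fS fSi : EuclideanSpace ℝ (Fin d) → ℝ)
    (hfS : fS = fun w => (1 / (n : ℝ)) * ∑ j, ℓ j w)
    (hfSi : fSi = fun w => (1 / ((n : ℝ) - 1)) * ∑ j ∈ univ.erase i, ℓ j w)
    (w₁ w₂ : EuclideanSpace ℝ (Fin d))
    (hw₁ : ∀ y, fS w₁ ≤ fS y)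
    (hw₂ : ∀ y, fSi w₂ ≤ fSi y)
    (hPLS : ∀ x, μ * (fS x - fS w₁) ≤ ‖gradient fS x‖ ^ 2)
    (hPLSi : ∀ x, μ * (fSi x - fSi w₂) ≤ ‖gradient fSi x‖ ^ 2) :
    |ℓ i w₁ - ℓ i w₂| ≤ L ^ 2 / (μ * n) + L ^ 2 / (μ * ((n : ℝ) - 1)) := by
  have hn₁ : (0 : ℝ) < n - 1 := by
    have : (2 : ℝ) ≤ n := by exact_mod_cast hn
    linarith
  have hn₀ : (0 : ℝ) < n := by linarith
  have hdS : Differentiable ℝ fS := hfS ▸ by fun_prop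
  have hdSi : Differentiable ℝ fSi := hfSi ▸ by fun_prop
  have hid : ∀ w, ℓ i w = n * fS w + (-(n - 1)) * fSi w := by
    intro w
    simp only [hfS, hfSi, ← sum_erase_add _ _ (mem_univ i)]
    field_simp
    ring
  have hS := abs_mul_sub_le_of_pl_of_isLocalMin hμ (hdiff i w₂) (hdSi w₂) (.of_forall hw₂)
    hn₀.ne' hid (hgrad i w₂) (hPLS w₂)
  have hSi := abs_mul_sub_le_of_pl_of_isLocalMin hμ (hdiff i w₁) (hdS w₁) (.of_forall hw₁)
    (by linarith : -(n - 1 : ℝ) ≠ 0) (fun w => by rw [hid w]; ring) (hgrad i w₁) (hPLSi w₁)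
  rw [abs_of_pos hn₀] at hS
  rw [abs_neg, abs_of_pos hn₁] at hSi
  have hS₀ := mul_nonneg hn₀.le (sub_nonneg.2 (hw₁ w₂))
  have hSi₀ := mul_nonneg hn₁.le (sub_nonneg.2 (hw₂ w₁))
  rw [hid w₁, hid w₂, abs_le]
  constructor <;> linarith
end

section
/- Let ℓ₁,…,ℓₙ : ℝ^d → ℝ (n ≥ 2) be differentiable, L-Lipschitz functions with ‖∇ℓⱼ(w)‖ ≤ L for all w and all j. Define f_S = (1/n)·Σ_{j=1}^n ℓⱼ and, for a fixed i, f_{S^i} = (1/(n−1))·Σ_{j≠i} ℓⱼ, and suppose both attain their infima and both satisfy the PL condition with parameter μ > 0. Let w₁* be a global minimizer of f_S, w₂* a global minimizer of f_{S^i}, and let w₁, w₂ ∈ ℝ^d satisfy ‖w₁ − w₁*‖ ≤ ε and ‖w₂ − w₂*‖ ≤ ε. Then |ℓᵢ(w₁) − ℓᵢ(w₂)| ≤ 2Lε + L²/(μn) + L²/(μ(n−1)). -/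
/-!
Write `ℓᵢ = n f_S − (n − 1) f_{S^i}`. At the minimizer `w₁*` of `f_S` the gradient of `f_S`
vanishes, so `(n − 1) ∇f_{S^i}(w₁*) = −∇ℓᵢ(w₁*)` has norm at most `L`; symmetrically
`n ‖∇f_S(w₂*)‖ ≤ L`. The PL inequality turns these gradient bounds into bounds on the
suboptimality gaps `f_S(w₂*) − f_S(w₁*)` and `f_{S^i}(w₁*) − f_{S^i}(w₂*)`, and
`ℓᵢ(w₂*) − ℓᵢ(w₁*)` is the combination `n · gap + (n − 1) · gap'` of the two. The Lipschitz
bound accounts for the distance `ε` of `w₁, w₂` from the minimizers.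
-/

open Finset

theorem norm_gradient_eq_norm_fderiv {𝕜 F : Type*} [RCLike 𝕜] [NormedAddCommGroup F]
    [InnerProductSpace 𝕜 F] [CompleteSpace F] (f : F → 𝕜) (x : F) :
    ‖gradient f x‖ = ‖fderiv 𝕜 f x‖ :=
  (InnerProductSpace.toDual 𝕜 F).symm.norm_map _

theorem mul_le_sq_div_of_pl {μ c g L gap : ℝ} (hμ : 0 < μ) (hc : 0 < c) (hg : 0 ≤ g)
    (hPL : μ * gap ≤ g ^ 2) (hcg : c * g ≤ L) : c * gap ≤ L ^ 2 / (μ * c) := by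
  rw [le_div_iff₀ (by positivity)]
  nlinarith [mul_nonneg hc.le hg, mul_le_mul_of_nonneg_left hPL (sq_nonneg c)]

section InnerProductSpace

variable {E : Type*} [NormedAddCommGroup E] [InnerProductSpace ℝ E] [CompleteSpace E]

theorem norm_gradient_eq_of_isLocalMin_of_eq_add {h f g : E → ℝ} {a b : ℝ} {x : E}
    (hf : DifferentiableAt ℝ f x) (hg : DifferentiableAt ℝ g x)
    (hdecomp : h = fun w => a * f w + b * g w) (hmin : IsLocalMin f x) :
    ‖gradient h x‖ = |b| * ‖gradient g x‖ := by
  rw [norm_gradient_eq_norm_fderiv, norm_gradient_eq_norm_fderiv, hdecomp,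
    fderiv_fun_add (hf.const_mul a) (hg.const_mul b), fderiv_const_mul hf, fderiv_const_mul hg,
    hmin.fderiv_eq_zero, smul_zero, zero_add, norm_smul, Real.norm_eq_abs]

theorem abs_sub_le_of_pl_of_eq_mul_sub {h f g : E → ℝ} {a b μ L : ℝ} {x y : E}
    (ha : 0 < a) (hb : 0 < b) (hμ : 0 < μ) (hf : Differentiable ℝ f) (hg : Differentiable ℝ g)
    (hdecomp : ∀ w, h w = a * f w - b * g w)
    (hx : ∀ w, f x ≤ f w) (hy : ∀ w, g y ≤ g w)
    (hPLf : ∀ w, μ * (f w - f x) ≤ ‖gradient f w‖ ^ 2)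
    (hPLg : ∀ w, μ * (g w - g y) ≤ ‖gradient g w‖ ^ 2)
    (hgrad : ∀ w, ‖gradient h w‖ ≤ L) :
    |h x - h y| ≤ L ^ 2 / (μ * a) + L ^ 2 / (μ * b) := by
  have hgx : b * ‖gradient g x‖ ≤ L := by
    have := norm_gradient_eq_of_isLocalMin_of_eq_add (h := h) (a := a) (b := -b) (hf x) (hg x)
      (funext fun w => by rw [hdecomp]; ring) (Filter.Eventually.of_forall hx)
    rw [abs_neg, abs_of_pos hb] at this
    exact this ▸ hgrad x
  have hgy : a * ‖gradient f y‖ ≤ L := by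
    have := norm_gradient_eq_of_isLocalMin_of_eq_add (h := h) (a := -b) (b := a) (hg y) (hf y)
      (funext fun w => by rw [hdecomp]; ring) (Filter.Eventually.of_forall hy)
    rw [abs_of_pos ha] at this
    exact this ▸ hgrad y
  have hgap_f := mul_le_sq_div_of_pl hμ ha (norm_nonneg _) (hPLf y) hgy
  have hgap_g := mul_le_sq_div_of_pl hμ hb (norm_nonneg _) (hPLg x) hgx
  have hsplit : h y - h x = a * (f y - f x) + b * (g x - g y) := by
    rw [hdecomp, hdecomp]; ring
  have hnonneg : 0 ≤ h y - h x := by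
    rw [hsplit]
    exact add_nonneg (mul_nonneg ha.le (sub_nonneg.2 (hx y)))
      (mul_nonneg hb.le (sub_nonneg.2 (hy x)))
  rw [abs_sub_comm, abs_of_nonneg hnonneg]
  linarith

end InnerProductSpace

/-- **Pointwise hypothesis stability under PL, Case 1 (iterates near minimizers).**
With Lipschitz losses and the PL condition on both `f_S` and `f_{S^i}`, outputs `w₁, w₂`
within `ε` of the respective global minimizers `w₁*, w₂*` satisfy
`|ℓᵢ(w₁) − ℓᵢ(w₂)| ≤ 2Lε + L²/(μn) + L²/(μ(n−1))`. -/
theorem pl_pointwise_stability_case1 (d n : ℕ) (hn : 2 ≤ n) (i : Fin n) (L μ ε : ℝ)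
    (ℓ : Fin n → EuclideanSpace ℝ (Fin d) → ℝ)
    (hdiff : ∀ j, Differentiable ℝ (ℓ j))
    (hlip : ∀ j x y, |ℓ j x - ℓ j y| ≤ L * ‖x - y‖)
    (hgrad : ∀ j w, ‖gradient (ℓ j) w‖ ≤ L)
    (hμ : 0 < μ)
    (fS fSi : EuclideanSpace ℝ (Fin d) → ℝ)
    (hfS : fS = fun w => (1 / (n : ℝ)) * ∑ j, ℓ j w)
    (hfSi : fSi = fun w => (1 / ((n : ℝ) - 1)) * ∑ j ∈ univ.erase i, ℓ j w)
    (w₁s w₂s : EuclideanSpace ℝ (Fin d))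
    (hw₁s : ∀ y, fS w₁s ≤ fS y)
    (hw₂s : ∀ y, fSi w₂s ≤ fSi y)
    (hPLS : ∀ x, μ * (fS x - fS w₁s) ≤ ‖gradient fS x‖ ^ 2)
    (hPLSi : ∀ x, μ * (fSi x - fSi w₂s) ≤ ‖gradient fSi x‖ ^ 2)
    (w₁ w₂ : EuclideanSpace ℝ (Fin d))
    (hw₁ : ‖w₁ - w₁s‖ ≤ ε)
    (hw₂ : ‖w₂ - w₂s‖ ≤ ε) :
    |ℓ i w₁ - ℓ i w₂| ≤ 2 * L * ε + L ^ 2 / (μ * n) + L ^ 2 / (μ * ((n : ℝ) - 1)) := by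
  have hn' : (2 : ℝ) ≤ n := by exact_mod_cast hn
  have hL : 0 ≤ L := (norm_nonneg _).trans (hgrad i w₁)
  have hdecomp : ∀ w, ℓ i w = n * fS w - ((n : ℝ) - 1) * fSi w := by
    intro w
    have : (n : ℝ) - 1 ≠ 0 := by linarith
    simp only [hfS, hfSi, ← sum_erase_add _ _ (mem_univ i)]
    field_simp
    ring
  have hmid : |ℓ i w₁s - ℓ i w₂s| ≤ L ^ 2 / (μ * n) + L ^ 2 / (μ * ((n : ℝ) - 1)) :=
    abs_sub_le_of_pl_of_eq_mul_sub (by linarith) (by linarith) hμ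
      (by rw [hfS]; fun_prop) (by rw [hfSi]; fun_prop) hdecomp hw₁s hw₂s hPLS hPLSi (hgrad i)
  have hnear : ∀ w w', ‖w - w'‖ ≤ ε → |ℓ i w - ℓ i w'| ≤ L * ε := fun w w' h =>
    (hlip i w w').trans (mul_le_mul_of_nonneg_left h hL)
  have h₁ := hnear w₁ w₁s hw₁
  have h₂ := hnear w₂s w₂ (by rwa [norm_sub_rev])
  linarith [abs_sub_le (ℓ i w₁) (ℓ i w₁s) (ℓ i w₂), abs_sub_le (ℓ i w₁s) (ℓ i w₂s) (ℓ i w₂)]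
end

section
/- Let ℓ₁,…,ℓₙ and ℓ₁,…,ℓ_{n−1},ℓₙ' be two collections of differentiable functions ℝ^d → ℝ differing only in the last function, each with gradient norm at most L everywhere. Define f₁ = (1/n)·(Σ_{j=1}^{n−1} ℓⱼ + ℓₙ) and f₂ = (1/n)·(Σ_{j=1}^{n−1} ℓⱼ + ℓₙ'). Suppose f₁ satisfies the error bound with parameter μ > 0: for every x there is a global minimizer x_p of f₁ with ‖∇f₁(x)‖ ≥ μ·‖x − x_p‖. Let w₂* be a global minimizer of f₂ (so ∇f₂(w₂*) = 0) and let w₁* be a global minimizer of f₁ closest to w₂*. Then ‖w₁* − w₂*‖ ≤ 2L/(μn). -/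
/-!
At a minimizer `w₂*` of `f₂` the gradient of `f₂` vanishes, and `f₁ - f₂ = (ℓₙ - ℓₙ')/n`, so
`‖∇f₁(w₂*)‖ = ‖∇ℓₙ(w₂*) - ∇ℓₙ'(w₂*)‖/n ≤ 2L/n`. The error bound at `w₂*` produces a minimizer of
`f₁` within `‖∇f₁(w₂*)‖/μ` of `w₂*`, and the closest minimizer `w₁*` is at least as near.
-/

open InnerProductSpace
open scoped Gradient

section Gradient

variable {E : Type*} [NormedAddCommGroup E] [InnerProductSpace ℝ E] [CompleteSpace E]
  {f g h : E → ℝ} {f' g' x : E}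

theorem HasGradientAt.sub (hf : HasGradientAt f f' x) (hg : HasGradientAt g g' x) :
    HasGradientAt (fun y => f y - g y) (f' - g') x := by
  rw [hasGradientAt_iff_hasFDerivAt] at hf hg ⊢
  rw [map_sub]
  exact hf.sub hg

theorem HasGradientAt.const_mul (c : ℝ) (hf : HasGradientAt f f' x) :
    HasGradientAt (fun y => c * f y) (c • f') x := by
  rw [hasGradientAt_iff_hasFDerivAt] at hf ⊢
  rw [map_smul]
  exact hf.const_mul c

theorem IsLocalMin.hasGradientAt_eq_zero (hmin : IsLocalMin f x) (hf : HasGradientAt f f' x) :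
    f' = 0 := by
  rw [hasGradientAt_iff_hasFDerivAt] at hf
  simpa only [map_eq_zero_iff _ (toDual ℝ E).injective] using hmin.hasFDerivAt_eq_zero hf

/-- No differentiability of `f` is needed: where it fails, `∇ f x` is the junk value `0`. -/
theorem norm_gradient_le_of_isLocalMin_of_eq_add {h' : E} (hmin : IsLocalMin g x)
    (hh : HasGradientAt h h' x) (hfgh : ∀ y, f y = g y + h y) : ‖∇ f x‖ ≤ ‖h'‖ := by
  by_cases hf : DifferentiableAt ℝ f x
  · have hg : HasGradientAt g (∇ f x - h') x := by
      convert hf.hasGradientAt.sub hh using 1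
      funext y
      rw [hfgh, add_sub_cancel_right]
    rw [sub_eq_zero.mp (hmin.hasGradientAt_eq_zero hg)]
  · rw [gradient_eq_zero_of_not_differentiableAt hf, norm_zero]
    exact norm_nonneg _

theorem norm_sub_le_norm_gradient_div_of_errorBound {μ : ℝ} (hμ : 0 < μ)
    (hEB : ∀ x, ∃ xp, (∀ y, f xp ≤ f y) ∧ μ * ‖x - xp‖ ≤ ‖∇ f x‖) {x₁ : E}
    (hclosest : ∀ v, (∀ y, f v ≤ f y) → ‖x - x₁‖ ≤ ‖x - v‖) :
    ‖x - x₁‖ ≤ ‖∇ f x‖ / μ := by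
  obtain ⟨xp, hxp_min, hxp_bound⟩ := hEB x
  rw [le_div_iff₀ hμ, mul_comm]
  exact (mul_le_mul_of_nonneg_left (hclosest xp hxp_min) hμ.le).trans hxp_bound

end Gradient

open Finset

theorem pl_minimizers_close_general (d n : ℕ) (L μ : ℝ)
    (g : Fin (n - 1) → EuclideanSpace ℝ (Fin d) → ℝ)
    (ℓn ℓn' : EuclideanSpace ℝ (Fin d) → ℝ)
    (hdiffn : Differentiable ℝ ℓn)
    (hdiffn' : Differentiable ℝ ℓn')
    (hgradn : ∀ w, ‖gradient ℓn w‖ ≤ L)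
    (hgradn' : ∀ w, ‖gradient ℓn' w‖ ≤ L)
    (hμ : 0 < μ)
    (f₁ f₂ : EuclideanSpace ℝ (Fin d) → ℝ)
    (hf₁ : f₁ = fun w => (1 / (n : ℝ)) * (∑ j, g j w + ℓn w))
    (hf₂ : f₂ = fun w => (1 / (n : ℝ)) * (∑ j, g j w + ℓn' w))
    (hEB : ∀ x, ∃ xp, (∀ y, f₁ xp ≤ f₁ y) ∧ μ * ‖x - xp‖ ≤ ‖gradient f₁ x‖)
    (w₂s : EuclideanSpace ℝ (Fin d))
    (hw₂s : ∀ y, f₂ w₂s ≤ f₂ y)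
    (w₁s : EuclideanSpace ℝ (Fin d))
    (hclosest : ∀ v, (∀ y, f₁ v ≤ f₁ y) → ‖w₂s - w₁s‖ ≤ ‖w₂s - v‖) :
    ‖w₁s - w₂s‖ ≤ 2 * L / (μ * n) := by
  have hperturb : ∀ w, f₁ w = f₂ w + 1 / (n : ℝ) * (ℓn w - ℓn' w) := by
    intro w
    rw [hf₁, hf₂]
    ring
  have hgrad_perturb := ((hdiffn w₂s).hasGradientAt.sub (hdiffn' w₂s).hasGradientAt).const_mul
    (1 / (n : ℝ))
  have hnorm_perturb : ‖(1 / (n : ℝ)) • (∇ ℓn w₂s - ∇ ℓn' w₂s)‖ ≤ 2 * L / n :=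
    calc ‖(1 / (n : ℝ)) • (∇ ℓn w₂s - ∇ ℓn' w₂s)‖ = 1 / n * ‖∇ ℓn w₂s - ∇ ℓn' w₂s‖ := by
          rw [norm_smul, Real.norm_of_nonneg (by positivity)]
      _ ≤ 1 / n * (L + L) := by gcongr; exact norm_sub_le_of_le (hgradn w₂s) (hgradn' w₂s)
      _ = 2 * L / n := by ring
  calc ‖w₁s - w₂s‖ = ‖w₂s - w₁s‖ := norm_sub_rev _ _
    _ ≤ ‖∇ f₁ w₂s‖ / μ := norm_sub_le_norm_gradient_div_of_errorBound hμ hEB hclosest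
    _ ≤ 2 * L / n / μ := by
      gcongr
      exact (norm_gradient_le_of_isLocalMin_of_eq_add (Filter.Eventually.of_forall hw₂s)
        hgrad_perturb hperturb).trans hnorm_perturb
    _ = 2 * L / (μ * n) := by rw [div_div, mul_comm (n : ℝ)]

/-- **Minimizers of neighboring empirical risks are close under the PL error bound.**
For two empirical risks `f₁, f₂` built from `n` differentiable losses with gradient norms
bounded by `L`, differing only in the last loss, if `f₁` satisfies the error bound with
parameter `μ > 0`, `w₂*` is a global minimizer of `f₂`, and `w₁*` is a global minimizer of
`f₁` closest to `w₂*`, then `‖w₁* − w₂*‖ ≤ 2L/(μn)`. -/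
theorem pl_minimizers_close (d n : ℕ) (hn : 1 ≤ n) (L μ : ℝ)
    (g : Fin (n - 1) → EuclideanSpace ℝ (Fin d) → ℝ)
    (ℓn ℓn' : EuclideanSpace ℝ (Fin d) → ℝ)
    (hdiffg : ∀ j, Differentiable ℝ (g j))
    (hdiffn : Differentiable ℝ ℓn)
    (hdiffn' : Differentiable ℝ ℓn')
    (hgradg : ∀ j w, ‖gradient (g j) w‖ ≤ L)
    (hgradn : ∀ w, ‖gradient ℓn w‖ ≤ L)
    (hgradn' : ∀ w, ‖gradient ℓn' w‖ ≤ L)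
    (hμ : 0 < μ)
    (f₁ f₂ : EuclideanSpace ℝ (Fin d) → ℝ)
    (hf₁ : f₁ = fun w => (1 / (n : ℝ)) * (∑ j, g j w + ℓn w))
    (hf₂ : f₂ = fun w => (1 / (n : ℝ)) * (∑ j, g j w + ℓn' w))
    (hEB : ∀ x, ∃ xp, (∀ y, f₁ xp ≤ f₁ y) ∧ μ * ‖x - xp‖ ≤ ‖gradient f₁ x‖)
    (w₂s : EuclideanSpace ℝ (Fin d))
    (hw₂s : ∀ y, f₂ w₂s ≤ f₂ y)
    (w₁s : EuclideanSpace ℝ (Fin d))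
    (hw₁s : ∀ y, f₁ w₁s ≤ f₁ y)
    (hclosest : ∀ v, (∀ y, f₁ v ≤ f₁ y) → ‖w₂s - w₁s‖ ≤ ‖w₂s - v‖) :
    ‖w₁s - w₂s‖ ≤ 2 * L / (μ * n) :=
  pl_minimizers_close_general d n L μ g ℓn ℓn' hdiffn hdiffn' hgradn hgradn' hμ f₁ f₂ hf₁ hf₂ hEB
    w₂s hw₂s w₁s hclosest
end

section
/- Let ℓ₁,…,ℓₙ and ℓ₁,…,ℓ_{n−1},ℓₙ' be two collections of differentiable L-Lipschitz functions ℝ^d → ℝ differing only in the last function, each with gradient norm at most L everywhere. Define f₁ = (1/n)·(Σ_{j=1}^{n−1} ℓⱼ + ℓₙ) and f₂ = (1/n)·(Σ_{j=1}^{n−1} ℓⱼ + ℓₙ'). Suppose f₁ satisfies the error bound with parameter μ > 0 (for every x there is a global minimizer x_p of f₁ with ‖∇f₁(x)‖ ≥ μ·‖x − x_p‖). Let w₂* be a global minimizer of f₂, w₁* a global minimizer of f₁ closest to w₂*, and let w₁, w₂ ∈ ℝ^d satisfy ‖w₁ − w₁*‖ ≤ ε and ‖w₂ − w₂*‖ ≤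 ε. Then for every L-Lipschitz function ℓ : ℝ^d → ℝ, |ℓ(w₁) − ℓ(w₂)| ≤ 2Lε + 2L²/(μn). -/
open Finset

/-- **Uniform stability under the PL error bound.** For two empirical risks `f₁, f₂` built
from `n` differentiable `L`-Lipschitz losses (gradient norms bounded by `L`) differing only
in the last loss, if `f₁` satisfies the error bound with parameter `μ > 0`, `w₂*` is a
global minimizer of `f₂`, `w₁*` a global minimizer of `f₁` closest to `w₂*`, and `w₁, w₂`
are within `ε` of `w₁*, w₂*`, then every `L`-Lipschitz function differs at `w₁` and `w₂` by
at most `2Lε + 2L²/(μn)`. -/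
theorem pl_uniform_stability (d n : ℕ) (hn : 1 ≤ n) (L μ ε : ℝ)
    (g : Fin (n - 1) → EuclideanSpace ℝ (Fin d) → ℝ)
    (ℓn ℓn' : EuclideanSpace ℝ (Fin d) → ℝ)
    (hdiffg : ∀ j, Differentiable ℝ (g j))
    (hdiffn : Differentiable ℝ ℓn)
    (hdiffn' : Differentiable ℝ ℓn')
    (hlipg : ∀ j x y, |g j x - g j y| ≤ L * ‖x - y‖)
    (hlipn : ∀ x y, |ℓn x - ℓn y| ≤ L * ‖x - y‖)
    (hlipn' : ∀ x y, |ℓn' x - ℓn' y| ≤ L * ‖x - y‖)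
    (hgradg : ∀ j w, ‖gradient (g j) w‖ ≤ L)
    (hgradn : ∀ w, ‖gradient ℓn w‖ ≤ L)
    (hgradn' : ∀ w, ‖gradient ℓn' w‖ ≤ L)
    (hμ : 0 < μ)
    (f₁ f₂ : EuclideanSpace ℝ (Fin d) → ℝ)
    (hf₁ : f₁ = fun w => (1 / (n : ℝ)) * (∑ j, g j w + ℓn w))
    (hf₂ : f₂ = fun w => (1 / (n : ℝ)) * (∑ j, g j w + ℓn' w))
    (hEB : ∀ x, ∃ xp, (∀ y, f₁ xp ≤ f₁ y) ∧ μ * ‖x - xp‖ ≤ ‖gradient f₁ x‖)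
    (w₂s : EuclideanSpace ℝ (Fin d))
    (hw₂s : ∀ y, f₂ w₂s ≤ f₂ y)
    (w₁s : EuclideanSpace ℝ (Fin d))
    (hw₁s : ∀ y, f₁ w₁s ≤ f₁ y)
    (hclosest : ∀ v, (∀ y, f₁ v ≤ f₁ y) → ‖w₂s - w₁s‖ ≤ ‖w₂s - v‖)
    (w₁ w₂ : EuclideanSpace ℝ (Fin d))
    (hw₁ : ‖w₁ - w₁s‖ ≤ ε)
    (hw₂ : ‖w₂ - w₂s‖ ≤ ε) :
    ∀ ℓ : EuclideanSpace ℝ (Fin d) → ℝ, (∀ x y, |ℓ x - ℓ y| ≤ L * ‖x - y‖) →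
      |ℓ w₁ - ℓ w₂| ≤ 2 * L * ε + 2 * L ^ 2 / (μ * n) := by
  intro ℓ hlip
  have hL : 0 ≤ L := le_trans (norm_nonneg _) (hgradn 0)
  have hnpos : (0:ℝ) < n := by exact_mod_cast hn
  -- f₂ differentiable
  have hdsum : Differentiable ℝ (fun w : EuclideanSpace ℝ (Fin d) => ∑ j, g j w) :=
    Differentiable.fun_sum fun j _ => hdiffg j
  have hdf₂ : Differentiable ℝ f₂ := by
    rw [hf₂]; exact Differentiable.const_mul (hdsum.add hdiffn') _
  -- fderiv f₂ at w₂s is 0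
  have hmin : IsLocalMin f₂ w₂s := Filter.Eventually.of_forall hw₂s
  have h0 : fderiv ℝ f₂ w₂s = 0 := hmin.fderiv_eq_zero
  -- f₁ as f₂ plus correction
  have hfun : f₁ = fun w => f₂ w + ((1:ℝ)/n) • ℓn w - ((1:ℝ)/n) • ℓn' w := by
    rw [hf₁, hf₂]; funext w; simp only [smul_eq_mul]; ring
  have h1 : HasFDerivAt f₁
      ((fderiv ℝ f₂ w₂s + ((1:ℝ)/n) • fderiv ℝ ℓn w₂s) - ((1:ℝ)/n) • fderiv ℝ ℓn' w₂s) w₂s := by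
    rw [hfun]
    exact (((hdf₂ w₂s).hasFDerivAt.add (((hdiffn w₂s).hasFDerivAt.const_smul
      ((1:ℝ)/n)))).sub ((hdiffn' w₂s).hasFDerivAt.const_smul ((1:ℝ)/n)))
  have hgrad : gradient f₁ w₂s
      = ((1:ℝ)/n) • gradient ℓn w₂s - ((1:ℝ)/n) • gradient ℓn' w₂s := by
    unfold gradient
    rw [h1.fderiv, h0]
    simp [map_sub, map_add, map_smul]
  have hnorm : ‖gradient f₁ w₂s‖ ≤ 2 * L / n := by
    rw [hgrad]
    calc ‖((1:ℝ)/n) • gradient ℓn w₂s - ((1:ℝ)/n) • gradient ℓn' w₂s‖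
        ≤ ‖((1:ℝ)/n) • gradient ℓn w₂s‖ + ‖((1:ℝ)/n) • gradient ℓn' w₂s‖ := norm_sub_le _ _
      _ ≤ (1/n) * L + (1/n) * L := by
          rw [norm_smul, norm_smul]
          have h1n : ‖(1:ℝ)/n‖ = 1/n := by
            rw [Real.norm_eq_abs, abs_of_nonneg (by positivity)]
          rw [h1n]
          gcongr
          · exact hgradn _
          · exact hgradn' _
      _ = 2 * L / n := by ring
  obtain ⟨xp, hxpmin, hxp⟩ := hEB w₂s
  have hdist : ‖w₂s - w₁s‖ ≤ 2 * L / (μ * n) := by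
    have h2 : μ * ‖w₂s - w₁s‖ ≤ 2 * L / n :=
      le_trans (by
        have := hclosest xp hxpmin
        nlinarith [hxp, mul_le_mul_of_nonneg_left this (le_of_lt hμ)]) hnorm
    have h3 : μ * ‖w₂s - w₁s‖ * n ≤ 2 * L := by
      have h4 := mul_le_mul_of_nonneg_right h2 hnpos.le
      rwa [div_mul_cancel₀ _ (ne_of_gt hnpos)] at h4
    rw [le_div_iff₀ (by positivity)]
    nlinarith
  have hw12 : ‖w₁ - w₂‖ ≤ 2 * ε + 2 * L / (μ * n) := by
    calc ‖w₁ - w₂‖ = ‖(w₁ - w₁s) + ((w₁s - w₂s) + (w₂s - w₂))‖ := by abel_nf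
      _ ≤ ‖w₁ - w₁s‖ + (‖w₁s - w₂s‖ + ‖w₂s - w₂‖) := norm_add_le_of_le le_rfl (norm_add_le _ _)
      _ ≤ ε + (2 * L / (μ * n) + ε) := by
          gcongr
          · rw [norm_sub_rev]; exact hdist
          · rw [norm_sub_rev]; exact hw₂
      _ = 2 * ε + 2 * L / (μ * n) := by ring
  calc |ℓ w₁ - ℓ w₂| ≤ L * ‖w₁ - w₂‖ := hlip _ _
    _ ≤ L * (2 * ε + 2 * L / (μ * n)) := by gcongr
    _ = 2 * L * ε + L * (2 * L / (μ * n)) := by ring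
    _ = 2 * L ^ 2 / (μ * n) + 2 * L * ε := by field_simp; ring
    _ = 2 * L * ε + 2 * L ^ 2 / (μ * n) := by ring
end

section
/- Let ℓ₁,…,ℓₙ and ℓ₁,…,ℓ_{n−1},ℓₙ' be two collections of functions ℝ^d → [0, c] differing only in the last function. Define f₁ = (1/n)·(Σ_{j=1}^{n−1} ℓⱼ + ℓₙ) and f₂ = (1/n)·(Σ_{j=1}^{n−1} ℓⱼ + ℓₙ'). Suppose f₁ satisfies the QG condition with parameter μ > 0. Let w₂* be a global minimizer of f₂ and let w₁* be a global minimizer of f₁ closest to w₂* (in the sense of the QG condition at w₂*). Then ‖w₁* − w₂*‖ ≤ 2·√(c/(μn)). -/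
/-! A minimizer `w₂*` of `f₂` is `2c/n`-suboptimal for `f₁`, since `f₁` and `f₂` differ by at
most `c/n` everywhere. Quadratic growth of `f₁` at `w₂*` turns this suboptimality gap into
`μ/2 · ‖w₂* − w₁*‖² ≤ 2c/n`. -/

theorem le_add_two_mul_of_abs_sub_le_of_isMinimizer {α : Type*} {f g : α → ℝ} {ε : ℝ}
    (hfg : ∀ x, |f x - g x| ≤ ε) {a : α} (ha : ∀ y, g a ≤ g y) (b : α) :
    f a ≤ f b + 2 * ε := by
  have hfa := (abs_le.mp (hfg a)).2
  have hfb := (abs_le.mp (hfg b)).1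
  linarith [ha b]

theorem le_two_mul_sqrt_of_mul_sq_le {r μ ε : ℝ} (hμ : 0 < μ) (h : μ / 2 * r ^ 2 ≤ 2 * ε) :
    r ≤ 2 * √(ε / μ) := by
  have hsq : (r / 2) ^ 2 ≤ ε / μ := by
    rw [le_div_iff₀ hμ]
    linarith
  linarith [le_abs_self (r / 2), Real.abs_le_sqrt hsq]

theorem norm_sub_le_of_quadraticGrowth_of_abs_sub_le {E : Type*} [SeminormedAddCommGroup E]
    {f g : E → ℝ} {ε μ : ℝ} (hμ : 0 < μ) (hfg : ∀ x, |f x - g x| ≤ ε) {a b : E}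
    (ha : ∀ y, g a ≤ g y) (hqg : μ / 2 * ‖a - b‖ ^ 2 ≤ f a - f b) :
    ‖b - a‖ ≤ 2 * √(ε / μ) := by
  have hgap := le_add_two_mul_of_abs_sub_le_of_isMinimizer hfg ha b
  rw [norm_sub_rev]
  exact le_two_mul_sqrt_of_mul_sq_le hμ (by linarith)

theorem abs_one_div_mul_add_sub_one_div_mul_add_le {n s a b c : ℝ} (hn : 0 ≤ n)
    (ha₀ : 0 ≤ a) (ha : a ≤ c) (hb₀ : 0 ≤ b) (hb : b ≤ c) :
    |1 / n * (s + a) - 1 / n * (s + b)| ≤ c / n := by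
  rw [← mul_sub, add_sub_add_left_eq_sub, abs_mul, abs_of_nonneg (by positivity),
    one_div_mul_eq_div]
  gcongr
  exact abs_sub_le_of_nonneg_of_le ha₀ ha hb₀ hb

theorem qg_minimizers_close_general (d n : ℕ) (c μ : ℝ)
    (g : Fin (n - 1) → EuclideanSpace ℝ (Fin d) → ℝ)
    (ℓn ℓn' : EuclideanSpace ℝ (Fin d) → ℝ)
    (hnnonneg : ∀ w, 0 ≤ ℓn w) (hnbdd : ∀ w, ℓn w ≤ c)
    (hnnonneg' : ∀ w, 0 ≤ ℓn' w) (hnbdd' : ∀ w, ℓn' w ≤ c)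
    (hμ : 0 < μ)
    (f₁ f₂ : EuclideanSpace ℝ (Fin d) → ℝ)
    (hf₁ : f₁ = fun w => (1 / (n : ℝ)) * (∑ j, g j w + ℓn w))
    (hf₂ : f₂ = fun w => (1 / (n : ℝ)) * (∑ j, g j w + ℓn' w))
    (w₂s : EuclideanSpace ℝ (Fin d))
    (hw₂s : ∀ y, f₂ w₂s ≤ f₂ y)
    (w₁s : EuclideanSpace ℝ (Fin d))
    (hQGat : μ / 2 * ‖w₂s - w₁s‖ ^ 2 ≤ f₁ w₂s - f₁ w₁s) :
    ‖w₁s - w₂s‖ ≤ 2 * Real.sqrt (c / (μ * n)) := by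
  have hdiff : ∀ w, |f₁ w - f₂ w| ≤ c / n := fun w => by
    subst hf₁ hf₂
    exact abs_one_div_mul_add_sub_one_div_mul_add_le n.cast_nonneg
      (hnnonneg w) (hnbdd w) (hnnonneg' w) (hnbdd' w)
  rw [mul_comm μ, ← div_div]
  exact norm_sub_le_of_quadraticGrowth_of_abs_sub_le hμ hdiff hw₂s hQGat

/-- **Minimizers of neighboring empirical risks are close under QG (Lemma on QG bound).**
For two empirical risks `f₁, f₂` built from `n` losses with values in `[0, c]`, differing
only in the last loss, if `f₁` satisfies the QG condition with parameter `μ > 0`, `w₂*` is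
a global minimizer of `f₂`, and `w₁*` is a global minimizer of `f₁` closest to `w₂*` in the
sense of the QG condition at `w₂*`, then `‖w₁* − w₂*‖ ≤ 2√(c/(μn))`. -/
theorem qg_minimizers_close (d n : ℕ) (hn : 1 ≤ n) (c μ : ℝ)
    (g : Fin (n - 1) → EuclideanSpace ℝ (Fin d) → ℝ)
    (ℓn ℓn' : EuclideanSpace ℝ (Fin d) → ℝ)
    (hgnonneg : ∀ j w, 0 ≤ g j w) (hgbdd : ∀ j w, g j w ≤ c)
    (hnnonneg : ∀ w, 0 ≤ ℓn w) (hnbdd : ∀ w, ℓn w ≤ c)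
    (hnnonneg' : ∀ w, 0 ≤ ℓn' w) (hnbdd' : ∀ w, ℓn' w ≤ c)
    (hμ : 0 < μ)
    (f₁ f₂ : EuclideanSpace ℝ (Fin d) → ℝ)
    (hf₁ : f₁ = fun w => (1 / (n : ℝ)) * (∑ j, g j w + ℓn w))
    (hf₂ : f₂ = fun w => (1 / (n : ℝ)) * (∑ j, g j w + ℓn' w))
    (hQG : ∀ x, ∃ xp, (∀ y, f₁ xp ≤ f₁ y) ∧ μ / 2 * ‖x - xp‖ ^ 2 ≤ f₁ x - f₁ xp)
    (w₂s : EuclideanSpace ℝ (Fin d))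
    (hw₂s : ∀ y, f₂ w₂s ≤ f₂ y)
    (w₁s : EuclideanSpace ℝ (Fin d))
    (hw₁s : ∀ y, f₁ w₁s ≤ f₁ y)
    (hQGat : μ / 2 * ‖w₂s - w₁s‖ ^ 2 ≤ f₁ w₂s - f₁ w₁s) :
    ‖w₁s - w₂s‖ ≤ 2 * Real.sqrt (c / (μ * n)) :=
  qg_minimizers_close_general d n c μ g ℓn ℓn' hnnonneg hnbdd hnnonneg' hnbdd' hμ f₁ f₂ hf₁ hf₂ w₂s
    hw₂s w₁s hQGat
end

section
/- Let g : ℝ^d → ℝ be λ-strongly convex and differentiable with β-Lipschitz gradient, where 0 < λ ≤ β. Then for any step size 0 < γ ≤ 1/β, the gradient-descent map is a contraction: for all x, y, ‖(x − γ∇g(x)) − (y − γ∇g(y))‖ ≤ (1 − γλ)·‖x − y‖. -/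
/-! Subtracting `λ/2 ‖·‖²` turns `g` into a convex function whose gradient `∇g - λ • id` obeys
the quadratic upper bound with constant `β - λ`, and is therefore `1/(β - λ)`-cocoercive
(Baillon–Haddad; for `λ = β` it is constant). Writing `x - γ ∇g x = (1 - γλ) x - γ (∇g x - λ x)`
and expanding the square, cocoercivity absorbs the cross term as soon as
`γ (β - λ) ≤ 2 (1 - γλ)`, which follows from `γβ ≤ 1`. -/

open RealInnerProductSpace Set

variable {E : Type*} [NormedAddCommGroup E] [InnerProductSpace ℝ E]

def HasQuadraticLowerBound (f : E → ℝ) (G : E → E) (m : ℝ) : Prop :=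
  ∀ x y, f x + ⟪G x, y - x⟫ + m / 2 * ‖y - x‖ ^ 2 ≤ f y

def HasQuadraticUpperBound (f : E → ℝ) (G : E → E) (L : ℝ) : Prop :=
  ∀ x y, f y ≤ f x + ⟪G x, y - x⟫ + L / 2 * ‖y - x‖ ^ 2

theorem quadratic_model_sub_half_sq_norm (a m lam : ℝ) (u x y : E) :
    a - lam / 2 * ‖x‖ ^ 2 + ⟪u - lam • x, y - x⟫ + (m - lam) / 2 * ‖y - x‖ ^ 2 =
      a + ⟪u, y - x⟫ + m / 2 * ‖y - x‖ ^ 2 - lam / 2 * ‖y‖ ^ 2 := by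
  rw [inner_sub_left, real_inner_smul_left, inner_sub_right x, real_inner_self_eq_norm_sq,
    norm_sub_sq_real, real_inner_comm y x]
  ring

namespace HasQuadraticLowerBound

variable {f : E → ℝ} {G : E → E} {m : ℝ}

theorem sub_half_sq_norm (h : HasQuadraticLowerBound f G m) (lam : ℝ) :
    HasQuadraticLowerBound (fun z => f z - lam / 2 * ‖z‖ ^ 2) (fun z => G z - lam • z)
      (m - lam) := fun x y => by
  have := h x y
  simp only [quadratic_model_sub_half_sq_norm]
  linarith

theorem mul_sq_norm_sub_le_inner (h : HasQuadraticLowerBound f G m) (x y : E) :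
    m * ‖x - y‖ ^ 2 ≤ ⟪G x - G y, x - y⟫ := by
  have hxy := h x y
  have hyx := h y x
  rw [← neg_sub x y, inner_neg_right, norm_neg] at hxy
  rw [inner_sub_left]
  linarith

end HasQuadraticLowerBound

namespace HasQuadraticUpperBound

variable {f : E → ℝ} {G : E → E} {c : ℝ}

theorem sub_half_sq_norm (h : HasQuadraticUpperBound f G c) (lam : ℝ) :
    HasQuadraticUpperBound (fun z => f z - lam / 2 * ‖z‖ ^ 2) (fun z => G z - lam • z)
      (c - lam) := fun x y => by
  have := h x y
  simp only [quadratic_model_sub_half_sq_norm]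
  linarith

theorem add_inner_add_sq_norm_sub_le (h : HasQuadraticUpperBound f G c)
    (hconv : HasQuadraticLowerBound f G 0) (hc : 0 < c) (x y : E) :
    f x + ⟪G x, y - x⟫ + 1 / (2 * c) * ‖G x - G y‖ ^ 2 ≤ f y := by
  -- `z` minimises the upper model at `y` of `f - ⟪G x, ·⟫`
  set z := y - c⁻¹ • (G y - G x)
  have hlow := hconv x z
  have hup := h y z
  have hzx : z - x = (y - x) - c⁻¹ • (G y - G x) := by simp only [z]; abel
  have hzy : z - y = -(c⁻¹ • (G y - G x)) := by simp only [z]; abel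
  have hgap : c⁻¹ * ⟪G y, G y - G x⟫ - c⁻¹ * ⟪G x, G y - G x⟫ = c⁻¹ * ‖G x - G y‖ ^ 2 := by
    rw [← mul_sub, ← inner_sub_left, real_inner_self_eq_norm_sq, norm_sub_rev]
  rw [hzx, inner_sub_right, real_inner_smul_right, zero_div, zero_mul, add_zero] at hlow
  rw [hzy, inner_neg_right, real_inner_smul_right, norm_neg, norm_smul, norm_inv,
    Real.norm_of_nonneg hc.le, norm_sub_rev] at hup
  have hquad : c / 2 * (c⁻¹ * ‖G x - G y‖) ^ 2 = 1 / (2 * c) * ‖G x - G y‖ ^ 2 := by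
    field_simp
  have hlin : c⁻¹ * ‖G x - G y‖ ^ 2 = 2 * (1 / (2 * c) * ‖G x - G y‖ ^ 2) := by ring
  linarith

theorem sq_norm_sub_le_mul_inner (h : HasQuadraticUpperBound f G c)
    (hconv : HasQuadraticLowerBound f G 0) (hc : 0 < c) (x y : E) :
    ‖G x - G y‖ ^ 2 ≤ c * ⟪G x - G y, x - y⟫ := by
  have hxy := h.add_inner_add_sq_norm_sub_le hconv hc x y
  have hyx := h.add_inner_add_sq_norm_sub_le hconv hc y x
  rw [norm_sub_rev] at hyx
  have hsum : 1 / c * ‖G x - G y‖ ^ 2 ≤ ⟪G x - G y, x - y⟫ := by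
    rw [← neg_sub y x, inner_neg_right] at hyx
    rw [← neg_sub y x, inner_neg_right, inner_sub_left]
    have : 1 / c * ‖G x - G y‖ ^ 2 = 2 * (1 / (2 * c) * ‖G x - G y‖ ^ 2) := by ring
    linarith
  calc ‖G x - G y‖ ^ 2 = c * (1 / c * ‖G x - G y‖ ^ 2) := by field_simp
    _ ≤ c * ⟪G x - G y, x - y⟫ := by gcongr

end HasQuadraticUpperBound

theorem sub_smul_eq_of_inner_ge_of_norm_le {G : E → E} {m : ℝ}
    (hmono : ∀ x y, m * ‖x - y‖ ^ 2 ≤ ⟪G x - G y, x - y⟫)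
    (hlip : ∀ x y, ‖G x - G y‖ ≤ m * ‖x - y‖) (x y : E) :
    G x - m • x = G y - m • y := by
  set D := G x - G y
  set Δ := x - y
  have hD : ‖D‖ ^ 2 ≤ (m * ‖Δ‖) ^ 2 := pow_le_pow_left₀ (norm_nonneg D) (hlip x y) 2
  have hinner : ⟪D, Δ⟫ = m * ‖Δ‖ ^ 2 := by
    refine le_antisymm ?_ (hmono x y)
    calc ⟪D, Δ⟫ ≤ ‖D‖ * ‖Δ‖ := real_inner_le_norm D Δ
      _ ≤ m * ‖Δ‖ * ‖Δ‖ := by gcongr; exact hlip x y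
      _ = m * ‖Δ‖ ^ 2 := by ring
  have hzero : ‖D - m • Δ‖ ^ 2 ≤ 0 := by
    rw [norm_sub_sq_real, real_inner_smul_right, norm_smul, Real.norm_eq_abs, mul_pow, sq_abs,
      hinner]
    nlinarith
  rw [← sub_eq_zero, ← norm_eq_zero]
  have : G x - m • x - (G y - m • y) = D - m • Δ := by simp only [D, Δ, smul_sub]; abel
  rw [this]
  exact pow_eq_zero_iff two_ne_zero |>.1 (le_antisymm hzero (sq_nonneg _))

theorem norm_smul_sub_smul_le {u v : E} {a c γ : ℝ} (ha : 0 ≤ a) (hγ : 0 ≤ γ)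
    (hγc : γ * c ≤ 2 * a) (hv : ‖v‖ ^ 2 ≤ c * ⟪v, u⟫) (hvu : 0 ≤ ⟪v, u⟫) :
    ‖a • u - γ • v‖ ≤ a * ‖u‖ := by
  refine le_of_sq_le_sq ?_ (by positivity)
  rw [norm_sub_sq_real, norm_smul, norm_smul, real_inner_smul_left, real_inner_smul_right,
    real_inner_comm, Real.norm_of_nonneg ha, Real.norm_of_nonneg hγ]
  have : γ * (γ * c) * ⟪v, u⟫ ≤ γ * (2 * a) * ⟪v, u⟫ := by gcongr
  nlinarith [mul_le_mul_of_nonneg_left hv (sq_nonneg γ)]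

section Gradient

variable [CompleteSpace E] {g : E → ℝ} {β : ℝ}

theorem hasQuadraticUpperBound_of_gradient_lipschitz (hdiff : Differentiable ℝ g)
    (hsmooth : ∀ u v, ‖gradient g u - gradient g v‖ ≤ β * ‖u - v‖) :
    HasQuadraticUpperBound g (gradient g) β := by
  intro x y
  set Δ := y - x
  set φ : ℝ → ℝ := fun t => g (x + t • Δ) - t * ⟪gradient g x, Δ⟫ - β / 2 * t ^ 2 * ‖Δ‖ ^ 2
  have hφ : ∀ t, HasDerivAt φ
      (⟪gradient g (x + t • Δ), Δ⟫ - ⟪gradient g x, Δ⟫ - β * t * ‖Δ‖ ^ 2) t := by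
    intro t
    have hline : HasDerivAt (fun t : ℝ => x + t • Δ) Δ t := by
      simpa using ((hasDerivAt_id t).smul_const Δ).const_add x
    have hg := (hdiff (x + t • Δ)).hasGradientAt.hasFDerivAt.comp_hasDerivAt t hline
    refine ((hg.sub ((hasDerivAt_id t).mul_const ⟪gradient g x, Δ⟫)).sub
      (((hasDerivAt_pow 2 t).const_mul (β / 2)).mul_const (‖Δ‖ ^ 2))).congr_deriv ?_
    simp only [InnerProductSpace.toDual_apply_apply]
    ring
  have hφ_nonpos : ∀ t ∈ interior (Ici (0 : ℝ)),
      ⟪gradient g (x + t • Δ), Δ⟫ - ⟪gradient g x, Δ⟫ - β * t * ‖Δ‖ ^ 2 ≤ 0 := by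
    intro t ht
    rw [interior_Ici, mem_Ioi] at ht
    rw [sub_nonpos]
    calc ⟪gradient g (x + t • Δ), Δ⟫ - ⟪gradient g x, Δ⟫
        = ⟪gradient g (x + t • Δ) - gradient g x, Δ⟫ := (inner_sub_left _ _ _).symm
      _ ≤ ‖gradient g (x + t • Δ) - gradient g x‖ * ‖Δ‖ := real_inner_le_norm _ _
      _ ≤ β * ‖t • Δ‖ * ‖Δ‖ := by
        gcongr
        simpa using hsmooth (x + t • Δ) x
      _ = β * t * ‖Δ‖ ^ 2 := by rw [norm_smul, Real.norm_of_nonneg ht.le]; ring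
  have hanti : AntitoneOn φ (Ici 0) :=
    antitoneOn_of_hasDerivWithinAt_nonpos (convex_Ici 0)
      (fun t _ => (hφ t).continuousAt.continuousWithinAt)
      (fun t _ => (hφ t).hasDerivWithinAt) hφ_nonpos
  have := hanti self_mem_Ici (mem_Ici.2 zero_le_one) zero_le_one
  have hy : x + (1 : ℝ) • Δ = y := by simp [Δ]
  simp only [φ, hy, zero_smul, add_zero] at this
  linarith

theorem sq_norm_shifted_gradient_sub_le {lam : ℝ} (hlamβ : lam ≤ β) (hdiff : Differentiable ℝ g)
    (hsmooth : ∀ u v, ‖gradient g u - gradient g v‖ ≤ β * ‖u - v‖)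
    (hsc : HasQuadraticLowerBound g (gradient g) lam) (x y : E) :
    ‖(gradient g x - lam • x) - (gradient g y - lam • y)‖ ^ 2 ≤
      (β - lam) * ⟪(gradient g x - lam • x) - (gradient g y - lam • y), x - y⟫ := by
  rcases hlamβ.lt_or_eq with hlt | rfl
  · have hconv := hsc.sub_half_sq_norm lam
    rw [sub_self] at hconv
    exact ((hasQuadraticUpperBound_of_gradient_lipschitz hdiff hsmooth).sub_half_sq_norm
      lam).sq_norm_sub_le_mul_inner hconv (sub_pos.2 hlt) x y
  · rw [sub_smul_eq_of_inner_ge_of_norm_le hsc.mul_sq_norm_sub_le_inner hsmooth x y]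
    simp

end Gradient

theorem gd_map_contraction_general (d : ℕ) (g : EuclideanSpace ℝ (Fin d) → ℝ) (lam β γ : ℝ)
    (hlamβ : lam ≤ β)
    (hdiff : Differentiable ℝ g)
    (hsmooth : ∀ u v, ‖gradient g u - gradient g v‖ ≤ β * ‖u - v‖)
    (hsc : ∀ x y, g x + ⟪gradient g x, y - x⟫ + lam / 2 * ‖y - x‖ ^ 2 ≤ g y)
    (hγ0 : 0 < γ) (hγ : γ ≤ 1 / β) :
    ∀ x y, ‖(x - γ • gradient g x) - (y - γ • gradient g y)‖ ≤ (1 - γ * lam) * ‖x - y‖ := by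
  intro x y
  have hγβ : γ * β ≤ 1 := by
    rcases le_or_gt β 0 with hβ | hβ
    · linarith [mul_nonpos_of_nonneg_of_nonpos hγ0.le hβ]
    · exact (le_div_iff₀ hβ).1 hγ
  have hγlam : γ * lam ≤ γ * β := mul_le_mul_of_nonneg_left hlamβ hγ0.le
  have hsc : HasQuadraticLowerBound g (gradient g) lam := hsc
  have hmap : x - γ • gradient g x - (y - γ • gradient g y) =
      (1 - γ * lam) • (x - y) - γ • ((gradient g x - lam • x) - (gradient g y - lam • y)) := by
    module
  rw [hmap]
  refine norm_smul_sub_smul_le (c := β - lam) (by linarith) hγ0.le (by linarith)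
    (sq_norm_shifted_gradient_sub_le hlamβ hdiff hsmooth hsc x y) ?_
  simpa using (hsc.sub_half_sq_norm lam).mul_sq_norm_sub_le_inner x y

/-- **The gradient-descent map of a strongly convex smooth function is a contraction.**
If `g` is `λ`-strongly convex and differentiable with `β`-Lipschitz gradient
(`0 < λ ≤ β`), and `0 < γ ≤ 1/β`, then the gradient-descent map contracts distances by a
factor `1 − γλ`. -/
theorem gd_map_contraction (d : ℕ) (g : EuclideanSpace ℝ (Fin d) → ℝ) (lam β γ : ℝ)
    (hlam : 0 < lam) (hlamβ : lam ≤ β)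
    (hdiff : Differentiable ℝ g)
    (hsmooth : ∀ u v, ‖gradient g u - gradient g v‖ ≤ β * ‖u - v‖)
    (hsc : ∀ x y, g x + ⟪gradient g x, y - x⟫ + lam / 2 * ‖y - x‖ ^ 2 ≤ g y)
    (hγ0 : 0 < γ) (hγ : γ ≤ 1 / β) :
    ∀ x y, ‖(x - γ • gradient g x) - (y - γ • gradient g y)‖ ≤ (1 - γ * lam) * ‖x - y‖ :=
  gd_map_contraction_general d g lam β γ hlamβ hdiff hsmooth hsc hγ0 hγ
end

section
/- Let ℓ₁,…,ℓₙ and ℓ₁,…,ℓ_{n−1},ℓₙ' be two collections of differentiable functions ℝ^d → ℝ differing only in the last function, each convex and β-smooth, with ‖∇ℓₙ(w)‖ ≤ L and ‖∇ℓₙ'(w)‖ ≤ L for all w. Define f₁ = (1/n)·(Σ_{j=1}^{n−1} ℓⱼ + ℓₙ) and f₂ = (1/n)·(Σ_{j=1}^{n−1} ℓⱼ + ℓₙ'). Run gradient descent from a common initialization w₀ = ŵ₀: w_t = w_{t−1} − γ_t·∇f₁(w_{t−1}) and ŵ_t = ŵ_{t−1} − γ_t·∇f₂(ŵ_{t−1}),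 with step sizes 0 ≤ γ_t ≤ 2/β. Then ‖w_T − ŵ_T‖ ≤ (2L/n)·Σ_{t=1}^T γ_t; consequently, for every L-Lipschitz function ℓ : ℝ^d → ℝ, |ℓ(w_T) − ℓ(ŵ_T)| ≤ (2L²/n)·Σ_{t=1}^T γ_t. -/
/-! For convex `β`-smooth `f` the gradient is co-coercive,
`β⁻¹ ‖∇f y - ∇f x‖² ≤ ⟪∇f y - ∇f x, y - x⟫`, so the gradient step `u ↦ u - γ ∇f u` is
nonexpansive once `γ ≤ 2 / β`. Comparing `w_t` with the `f₁`-step taken from `ŵ_{t-1}`, the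
distance `‖w_t - ŵ_t‖` thus grows by at most `γ_t ‖∇f₁ - ∇f₂‖ ≤ 2L γ_t / n` per step, since the
gradients of the two risks differ by `(∇ℓₙ - ∇ℓₙ') / n`. -/

open Finset Set
open scoped InnerProductSpace Gradient

theorem dist_le_sum_of_lipschitzWith_one {X : Type*} [PseudoMetricSpace X] {Φ Ψ : ℕ → X → X}
    {c : ℕ → ℝ} (hΦ : ∀ t, LipschitzWith 1 (Φ t)) (hΦΨ : ∀ t z, dist (Φ t z) (Ψ t z) ≤ c (t + 1))
    {x y : ℕ → X} (h0 : x 0 = y 0) (hx : ∀ t, x (t + 1) = Φ t (x t))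
    (hy : ∀ t, y (t + 1) = Ψ t (y t)) (T : ℕ) : dist (x T) (y T) ≤ ∑ t ∈ Icc 1 T, c t := by
  induction T with
  | zero => simp [h0]
  | succ T ih =>
    rw [sum_Icc_succ_top (by omega), hx, hy]
    calc dist (Φ T (x T)) (Ψ T (y T))
        ≤ dist (Φ T (x T)) (Φ T (y T)) + dist (Φ T (y T)) (Ψ T (y T)) := dist_triangle _ _ _
      _ ≤ dist (x T) (y T) + c (T + 1) := by
          gcongr
          · simpa using (hΦ T).dist_le_mul (x T) (y T)
          · exact hΦΨ T (y T)
      _ ≤ ∑ t ∈ Icc 1 T, c t + c (T + 1) := by gcongr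

section ConvexSmooth

variable {F : Type*} [NormedAddCommGroup F] [InnerProductSpace ℝ F] [CompleteSpace F]
  {f : F → ℝ} {β : ℝ}

theorem DifferentiableAt.hasDerivAt_comp_add_smul {x h : F} {t : ℝ}
    (hf : DifferentiableAt ℝ f (x + t • h)) :
    HasDerivAt (fun s : ℝ => f (x + s • h)) ⟪∇ f (x + t • h), h⟫_ℝ t := by
  have hline : HasDerivAt (fun s : ℝ => x + s • h) h t := by
    simpa using ((hasDerivAt_id t).smul_const h).const_add x
  rw [inner_gradient_left]
  exact hf.hasFDerivAt.comp_hasDerivAt t hline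

theorem ConvexOn.inner_gradient_le_sub (hc : ConvexOn ℝ univ f) (hf : Differentiable ℝ f)
    (x y : F) : ⟪∇ f x, y - x⟫_ℝ ≤ f y - f x := by
  have hline : ConvexOn ℝ univ fun t : ℝ => f (x + t • (y - x)) := by
    simpa [Function.comp_def, AffineMap.lineMap_apply, add_comm] using
      hc.comp_affineMap (AffineMap.lineMap x y)
  have hd : HasDerivAt (fun t : ℝ => f (x + t • (y - x))) ⟪∇ f x, y - x⟫_ℝ 0 := by
    simpa using (hf (x + (0 : ℝ) • (y - x))).hasDerivAt_comp_add_smul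
  simpa [slope_def_field] using
    hline.le_slope_of_hasDerivAt (mem_univ 0) (mem_univ 1) one_pos hd

theorem le_add_inner_gradient_add_sq (hf : Differentiable ℝ f)
    (hsm : ∀ u v, ‖∇ f u - ∇ f v‖ ≤ β * ‖u - v‖) (x y : F) :
    f y ≤ f x + ⟪∇ f x, y - x⟫_ℝ + β / 2 * ‖y - x‖ ^ 2 := by
  set h := y - x
  have hd (t : ℝ) : HasDerivAt (fun s => f (x + s • h)) ⟪∇ f (x + t • h), h⟫_ℝ t :=
    (hf _).hasDerivAt_comp_add_smul
  have hq (t : ℝ) : HasDerivAt (fun s => f x + s * ⟪∇ f x, h⟫_ℝ + β / 2 * ‖h‖ ^ 2 * s ^ 2)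
      (⟪∇ f x, h⟫_ℝ + β * ‖h‖ ^ 2 * t) t := by
    refine ((((hasDerivAt_id' t).mul_const _).const_add (f x)).add
      ((hasDerivAt_pow 2 t).const_mul (β / 2 * ‖h‖ ^ 2))).congr_deriv ?_
    push_cast; ring
  have hslope : ∀ t ∈ Ico (0 : ℝ) 1,
      ⟪∇ f (x + t • h), h⟫_ℝ ≤ ⟪∇ f x, h⟫_ℝ + β * ‖h‖ ^ 2 * t := by
    intro t ht
    calc ⟪∇ f (x + t • h), h⟫_ℝ = ⟪∇ f x, h⟫_ℝ + ⟪∇ f (x + t • h) - ∇ f x, h⟫_ℝ := by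
          rw [inner_sub_left]; ring
      _ ≤ ⟪∇ f x, h⟫_ℝ + ‖∇ f (x + t • h) - ∇ f x‖ * ‖h‖ := by
          gcongr; exact real_inner_le_norm _ _
      _ ≤ ⟪∇ f x, h⟫_ℝ + β * ‖x + t • h - x‖ * ‖h‖ := by gcongr; exact hsm _ _
      _ = ⟪∇ f x, h⟫_ℝ + β * ‖h‖ ^ 2 * t := by
          rw [add_sub_cancel_left, norm_smul, Real.norm_of_nonneg ht.1]; ring
  have := image_le_of_deriv_right_le_deriv_boundary
    (fun t _ => (hd t).continuousAt.continuousWithinAt) (fun t _ => (hd t).hasDerivWithinAt)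
    (by simp) (fun t _ => (hq t).continuousAt.continuousWithinAt)
    (fun t _ => (hq t).hasDerivWithinAt) hslope (right_mem_Icc.2 zero_le_one)
  simpa [h] using this

theorem ConvexOn.add_inner_gradient_add_sq_le (hc : ConvexOn ℝ univ f) (hf : Differentiable ℝ f)
    (hβ : 0 < β) (hsm : ∀ u v, ‖∇ f u - ∇ f v‖ ≤ β * ‖u - v‖) (x y : F) :
    f x + ⟪∇ f x, y - x⟫_ℝ + (2 * β)⁻¹ * ‖∇ f y - ∇ f x‖ ^ 2 ≤ f y := by
  set D := ∇ f y - ∇ f x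
  -- compare the tangent bound at `x` with the quadratic bound at `y`, at a gradient step from `y`
  set z := y - β⁻¹ • D
  have hlow := hc.inner_gradient_le_sub hf x z
  have hup := le_add_inner_gradient_add_sq hf hsm y z
  rw [show z - x = (y - x) - β⁻¹ • D by simp only [z]; abel, inner_sub_right,
    real_inner_smul_right] at hlow
  rw [show z - y = -(β⁻¹ • D) by simp only [z]; abel, inner_neg_right, real_inner_smul_right,
    norm_neg, norm_smul, Real.norm_of_nonneg (inv_nonneg.2 hβ.le)] at hup
  have hD : ⟪∇ f y, D⟫_ℝ - ⟪∇ f x, D⟫_ℝ = ‖D‖ ^ 2 := by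
    rw [← inner_sub_left, real_inner_self_eq_norm_sq]
  have hβ' : β * β⁻¹ = 1 := mul_inv_cancel₀ hβ.ne'
  linear_combination hlow + hup - β⁻¹ * hD + (β⁻¹ * ‖D‖ ^ 2 / 2) * hβ'

theorem ConvexOn.inv_mul_norm_sub_gradient_sq_le_inner (hc : ConvexOn ℝ univ f)
    (hf : Differentiable ℝ f) (hβ : 0 < β) (hsm : ∀ u v, ‖∇ f u - ∇ f v‖ ≤ β * ‖u - v‖)
    (x y : F) : β⁻¹ * ‖∇ f y - ∇ f x‖ ^ 2 ≤ ⟪∇ f y - ∇ f x, y - x⟫_ℝ := by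
  have hxy := hc.add_inner_gradient_add_sq_le hf hβ hsm x y
  have hyx := hc.add_inner_gradient_add_sq_le hf hβ hsm y x
  rw [norm_sub_rev, ← neg_sub y x, inner_neg_right] at hyx
  rw [inner_sub_left]
  linear_combination hxy + hyx

theorem ConvexOn.lipschitzWith_one_sub_smul_gradient (hc : ConvexOn ℝ univ f)
    (hf : Differentiable ℝ f) (hβ : 0 < β) (hsm : ∀ u v, ‖∇ f u - ∇ f v‖ ≤ β * ‖u - v‖)
    {γ : ℝ} (hγ0 : 0 ≤ γ) (hγ : γ ≤ 2 / β) : LipschitzWith 1 fun u => u - γ • ∇ f u := by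
  refine LipschitzWith.mk_one fun u v => ?_
  rw [dist_eq_norm, dist_eq_norm]
  set D := ∇ f u - ∇ f v
  have hco := hc.inv_mul_norm_sub_gradient_sq_le_inner hf hβ hsm v u
  have hexp : ‖u - γ • ∇ f u - (v - γ • ∇ f v)‖ ^ 2
      = ‖u - v‖ ^ 2 - 2 * γ * ⟪D, u - v⟫_ℝ + γ ^ 2 * ‖D‖ ^ 2 := by
    rw [show u - γ • ∇ f u - (v - γ • ∇ f v) = (u - v) - γ • D by simp only [D]; module,
      norm_sub_sq_real, inner_smul_right, norm_smul, Real.norm_of_nonneg hγ0, real_inner_comm]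
    ring
  -- co-coercivity gives `‖u - v‖² - ‖step‖² ≥ γ (2 / β - γ) ‖D‖² ≥ 0`
  have hγβ : γ * β ≤ 2 := by rwa [le_div_iff₀ hβ] at hγ
  refine (sq_le_sq₀ (norm_nonneg _) (norm_nonneg _)).1 ?_
  rw [hexp]
  nlinarith [mul_le_mul_of_nonneg_left hco hγ0, mul_nonneg hγ0 (sq_nonneg ‖D‖),
    mul_inv_cancel₀ hβ.ne']

theorem ConvexOn.norm_sub_le_sum_of_gradient_descent (hc : ConvexOn ℝ univ f)
    (hf : Differentiable ℝ f) (hβ : 0 < β) (hsm : ∀ u v, ‖∇ f u - ∇ f v‖ ≤ β * ‖u - v‖)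
    {γ : ℕ → ℝ} (hγ0 : ∀ t, 0 ≤ γ t) (hγ : ∀ t, γ t ≤ 2 / β) {f' : F → ℝ} {δ : ℝ}
    (hδ : ∀ x, ‖∇ f x - ∇ f' x‖ ≤ δ) {w w' : ℕ → F} (h0 : w 0 = w' 0)
    (hw : ∀ t, w (t + 1) = w t - γ (t + 1) • ∇ f (w t))
    (hw' : ∀ t, w' (t + 1) = w' t - γ (t + 1) • ∇ f' (w' t)) (T : ℕ) :
    ‖w T - w' T‖ ≤ δ * ∑ t ∈ Icc 1 T, γ t := by
  rw [← dist_eq_norm, mul_sum]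
  refine dist_le_sum_of_lipschitzWith_one (Ψ := fun t u => u - γ (t + 1) • ∇ f' u)
    (fun t => hc.lipschitzWith_one_sub_smul_gradient hf hβ hsm (hγ0 (t + 1)) (hγ (t + 1)))
    (fun t z => ?_) h0 hw hw' T
  rw [dist_eq_norm, sub_sub_sub_cancel_left, ← smul_sub, norm_smul,
    Real.norm_of_nonneg (hγ0 _), norm_sub_rev, mul_comm δ]
  exact mul_le_mul_of_nonneg_left (hδ z) (hγ0 _)

end ConvexSmooth

section EmpiricalRisk

variable {ι : Type*} [Fintype ι]

theorem ConvexOn.const_mul_sum_add {E : Type*} [AddCommGroup E] [Module ℝ E] {s : Set E}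
    {g : ι → E → ℝ} {ℓ : E → ℝ} (hg : ∀ j, ConvexOn ℝ s (g j)) (hℓ : ConvexOn ℝ s ℓ) {c : ℝ}
    (hc : 0 ≤ c) : ConvexOn ℝ s fun w => c * (∑ j, g j w + ℓ w) := by
  have hsum : ConvexOn ℝ s fun w => ∑ j, g j w := by
    simpa only [Finset.sum_fn] using
      sum_induction (s := univ) g (ConvexOn ℝ s) (fun _ _ => ConvexOn.add)
        (convexOn_const 0 hℓ.1) fun j _ => hg j
  exact (hsum.add hℓ).smul hc

variable {F : Type*} [NormedAddCommGroup F] [InnerProductSpace ℝ F] [CompleteSpace F]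
  {g : ι → F → ℝ} {ℓ : F → ℝ}

theorem hasGradientAt_const_mul_sum_add (hg : ∀ j, Differentiable ℝ (g j))
    (hℓ : Differentiable ℝ ℓ) (c : ℝ) (x : F) :
    HasGradientAt (fun w => c * (∑ j, g j w + ℓ w)) (c • (∑ j, ∇ (g j) x + ∇ ℓ x)) x := by
  rw [hasGradientAt_iff_hasFDerivAt]
  refine (((HasFDerivAt.fun_sum (u := univ) fun j _ => (hg j x).hasFDerivAt).add
    (hℓ x).hasFDerivAt).const_mul c).congr_fderiv ?_
  simp [toDual_gradient]

theorem norm_gradient_const_mul_sum_add_sub_le (hg : ∀ j, Differentiable ℝ (g j))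
    (hℓ : Differentiable ℝ ℓ) {β : ℝ} (hsmg : ∀ j u v, ‖∇ (g j) u - ∇ (g j) v‖ ≤ β * ‖u - v‖)
    (hsmℓ : ∀ u v, ‖∇ ℓ u - ∇ ℓ v‖ ≤ β * ‖u - v‖) (c : ℝ) (u v : F) :
    ‖∇ (fun w => c * (∑ j, g j w + ℓ w)) u - ∇ (fun w => c * (∑ j, g j w + ℓ w)) v‖
      ≤ |c| * ((Fintype.card ι + 1) * β) * ‖u - v‖ := by
  rw [(hasGradientAt_const_mul_sum_add hg hℓ c u).gradient,
    (hasGradientAt_const_mul_sum_add hg hℓ c v).gradient, ← smul_sub, norm_smul,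
    Real.norm_eq_abs, mul_assoc]
  gcongr
  calc ‖∑ j, ∇ (g j) u + ∇ ℓ u - (∑ j, ∇ (g j) v + ∇ ℓ v)‖
      = ‖∑ j, (∇ (g j) u - ∇ (g j) v) + (∇ ℓ u - ∇ ℓ v)‖ := by rw [sum_sub_distrib]; abel_nf
    _ ≤ ∑ j, ‖∇ (g j) u - ∇ (g j) v‖ + ‖∇ ℓ u - ∇ ℓ v‖ :=
        (norm_add_le _ _).trans (by gcongr; exact norm_sum_le _ _)
    _ ≤ ∑ _j : ι, β * ‖u - v‖ + β * ‖u - v‖ := by gcongr with j <;> apply_assumption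
    _ = (Fintype.card ι + 1) * β * ‖u - v‖ := by simp [sum_const]; ring

theorem norm_gradient_const_mul_sum_add_sub_gradient_le (hg : ∀ j, Differentiable ℝ (g j))
    {ℓ' : F → ℝ} (hℓ : Differentiable ℝ ℓ) (hℓ' : Differentiable ℝ ℓ') {L : ℝ}
    (hL : ∀ x, ‖∇ ℓ x‖ ≤ L) (hL' : ∀ x, ‖∇ ℓ' x‖ ≤ L) (c : ℝ) (x : F) :
    ‖∇ (fun w => c * (∑ j, g j w + ℓ w)) x - ∇ (fun w => c * (∑ j, g j w + ℓ' w)) x‖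
      ≤ |c| * (2 * L) := by
  rw [(hasGradientAt_const_mul_sum_add hg hℓ c x).gradient,
    (hasGradientAt_const_mul_sum_add hg hℓ' c x).gradient, ← smul_sub,
    add_sub_add_left_eq_sub, norm_smul, Real.norm_eq_abs, two_mul]
  gcongr
  exact (norm_sub_le _ _).trans (add_le_add (hL x) (hL' x))

end EmpiricalRisk

theorem gd_stability_convex_general (d n : ℕ) (hn : 1 ≤ n) (L β : ℝ) (hβ : 0 < β)
    (g : Fin (n - 1) → EuclideanSpace ℝ (Fin d) → ℝ)
    (ℓn ℓn' : EuclideanSpace ℝ (Fin d) → ℝ)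
    (hdiffg : ∀ j, Differentiable ℝ (g j))
    (hdiffn : Differentiable ℝ ℓn)
    (hdiffn' : Differentiable ℝ ℓn')
    (hconvg : ∀ j, ConvexOn ℝ Set.univ (g j))
    (hconvn : ConvexOn ℝ Set.univ ℓn)
    (hsmg : ∀ j u v, ‖gradient (g j) u - gradient (g j) v‖ ≤ β * ‖u - v‖)
    (hsmn : ∀ u v, ‖gradient ℓn u - gradient ℓn v‖ ≤ β * ‖u - v‖)
    (hgradn : ∀ w, ‖gradient ℓn w‖ ≤ L)
    (hgradn' : ∀ w, ‖gradient ℓn' w‖ ≤ L)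
    (f₁ f₂ : EuclideanSpace ℝ (Fin d) → ℝ)
    (hf₁ : f₁ = fun w => (1 / (n : ℝ)) * (∑ j, g j w + ℓn w))
    (hf₂ : f₂ = fun w => (1 / (n : ℝ)) * (∑ j, g j w + ℓn' w))
    (γ : ℕ → ℝ) (hγ0 : ∀ t, 0 ≤ γ t) (hγ : ∀ t, γ t ≤ 2 / β)
    (w wh : ℕ → EuclideanSpace ℝ (Fin d))
    (h0 : w 0 = wh 0)
    (hw : ∀ t, w (t + 1) = w t - γ (t + 1) • gradient f₁ (w t))
    (hwh : ∀ t, wh (t + 1) = wh t - γ (t + 1) • gradient f₂ (wh t))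
    (T : ℕ) :
    ‖w T - wh T‖ ≤ (2 * L / (n : ℝ)) * ∑ t ∈ Finset.Icc 1 T, γ t ∧
      ∀ ℓ : EuclideanSpace ℝ (Fin d) → ℝ, (∀ x y, |ℓ x - ℓ y| ≤ L * ‖x - y‖) →
        |ℓ (w T) - ℓ (wh T)| ≤ (2 * L ^ 2 / (n : ℝ)) * ∑ t ∈ Finset.Icc 1 T, γ t := by
  subst hf₁ hf₂
  have hn0 : (0 : ℝ) < n := by exact_mod_cast hn
  have hsm₁ (u v : EuclideanSpace ℝ (Fin d)) :
      ‖gradient (fun w => (1 / (n : ℝ)) * (∑ j, g j w + ℓn w)) u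
        - gradient (fun w => (1 / (n : ℝ)) * (∑ j, g j w + ℓn w)) v‖ ≤ β * ‖u - v‖ := by
    convert norm_gradient_const_mul_sum_add_sub_le hdiffg hdiffn hsmg hsmn _ u v using 2
    rw [Fintype.card_fin, Nat.cast_sub hn, abs_of_pos (one_div_pos.2 hn0)]
    field_simp
    ring
  have hδ (x : EuclideanSpace ℝ (Fin d)) :
      ‖gradient (fun w => (1 / (n : ℝ)) * (∑ j, g j w + ℓn w)) x
        - gradient (fun w => (1 / (n : ℝ)) * (∑ j, g j w + ℓn' w)) x‖ ≤ 2 * L / n := by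
    convert norm_gradient_const_mul_sum_add_sub_gradient_le hdiffg hdiffn hdiffn' hgradn
      hgradn' _ x using 1
    rw [abs_of_pos (one_div_pos.2 hn0)]
    ring
  have hdist := (ConvexOn.const_mul_sum_add hconvg hconvn (one_div_pos.2 hn0).le)
    |>.norm_sub_le_sum_of_gradient_descent (by fun_prop) hβ hsm₁ hγ0 hγ hδ h0 hw hwh T
  refine ⟨hdist, fun ℓ hℓ => ?_⟩
  have hL : 0 ≤ L := (norm_nonneg _).trans (hgradn 0)
  calc |ℓ (w T) - ℓ (wh T)| ≤ L * ‖w T - wh T‖ := hℓ _ _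
    _ ≤ L * (2 * L / n * ∑ t ∈ Icc 1 T, γ t) := by gcongr
    _ = 2 * L ^ 2 / n * ∑ t ∈ Icc 1 T, γ t := by ring

/-- **Uniform stability of gradient descent for convex smooth losses.** Running GD with
step sizes `γ_t ≤ 2/β` from a common initialization on two empirical risks built from `n`
convex `β`-smooth losses differing only in the last loss (whose gradients are bounded by
`L`) yields iterates with `‖w_T − wh_T‖ ≤ (2L/n)·Σ_{t=1}^T γ_t`, and hence every
`L`-Lipschitz loss differs at the two iterates by at most `(2L²/n)·Σ_{t=1}^T γ_t`. -/
theorem gd_stability_convex (d n : ℕ) (hn : 1 ≤ n) (L β : ℝ) (hβ : 0 < β)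
    (g : Fin (n - 1) → EuclideanSpace ℝ (Fin d) → ℝ)
    (ℓn ℓn' : EuclideanSpace ℝ (Fin d) → ℝ)
    (hdiffg : ∀ j, Differentiable ℝ (g j))
    (hdiffn : Differentiable ℝ ℓn)
    (hdiffn' : Differentiable ℝ ℓn')
    (hconvg : ∀ j, ConvexOn ℝ Set.univ (g j))
    (hconvn : ConvexOn ℝ Set.univ ℓn)
    (hconvn' : ConvexOn ℝ Set.univ ℓn')
    (hsmg : ∀ j u v, ‖gradient (g j) u - gradient (g j) v‖ ≤ β * ‖u - v‖)
    (hsmn : ∀ u v, ‖gradient ℓn u - gradient ℓn v‖ ≤ β * ‖u - v‖)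
    (hsmn' : ∀ u v, ‖gradient ℓn' u - gradient ℓn' v‖ ≤ β * ‖u - v‖)
    (hgradn : ∀ w, ‖gradient ℓn w‖ ≤ L)
    (hgradn' : ∀ w, ‖gradient ℓn' w‖ ≤ L)
    (f₁ f₂ : EuclideanSpace ℝ (Fin d) → ℝ)
    (hf₁ : f₁ = fun w => (1 / (n : ℝ)) * (∑ j, g j w + ℓn w))
    (hf₂ : f₂ = fun w => (1 / (n : ℝ)) * (∑ j, g j w + ℓn' w))
    (γ : ℕ → ℝ) (hγ0 : ∀ t, 0 ≤ γ t) (hγ : ∀ t, γ t ≤ 2 / β)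
    (w wh : ℕ → EuclideanSpace ℝ (Fin d))
    (h0 : w 0 = wh 0)
    (hw : ∀ t, w (t + 1) = w t - γ (t + 1) • gradient f₁ (w t))
    (hwh : ∀ t, wh (t + 1) = wh t - γ (t + 1) • gradient f₂ (wh t))
    (T : ℕ) :
    ‖w T - wh T‖ ≤ (2 * L / (n : ℝ)) * ∑ t ∈ Finset.Icc 1 T, γ t ∧
      ∀ ℓ : EuclideanSpace ℝ (Fin d) → ℝ, (∀ x y, |ℓ x - ℓ y| ≤ L * ‖x - y‖) →
        |ℓ (w T) - ℓ (wh T)| ≤ (2 * L ^ 2 / (n : ℝ)) * ∑ t ∈ Finset.Icc 1 T, γ t :=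
  gd_stability_convex_general d n hn L β hβ g ℓn ℓn' hdiffg hdiffn hdiffn' hconvg hconvn hsmg hsmn
    hgradn hgradn' f₁ f₂ hf₁ hf₂ γ hγ0 hγ w wh h0 hw hwh T
end

section
/- Let g : ℝ^n → ℝ be λ-strongly convex and differentiable, let X be a real n × d matrix satisfying ‖Xw‖ ≥ s·‖w‖ for all w ∈ ℝ^d (smallest singular value at least s > 0), and let D be an n × n diagonal matrix whose diagonal entries all have absolute value at least c > 0. Define f : ℝ^d → ℝ by f(w) = g(D·X·w). Then f satisfies the PL-type inequality: for every w ∈ ℝ^d and every global minimizer w_p of f, f(w_p) ≥ f(w) − ‖∇f(w)‖² / (2·λ·s²·c²). -/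
open RealInnerProductSpace

set_option maxHeartbeats 1000000

/-- **PL-type inequality for a strongly convex function composed with `D·X` (linearized
ReLU network).** If `g` is `λ`-strongly convex and differentiable, `X` has smallest
singular value at least `s > 0`, and `D = diag(b)` with `|bⱼ| ≥ c > 0`, then
`f(w) = g(DXw)` satisfies `f(w_p) ≥ f(w) − ‖∇f(w)‖²/(2λs²c²)` for every `w` and every
global minimizer `w_p` of `f`. -/
theorem strongly_convex_relu_pl (n d : ℕ) (g : EuclideanSpace ℝ (Fin n) → ℝ)
    (lam s c : ℝ) (hlam : 0 < lam) (hs : 0 < s) (hc : 0 < c)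
    (hdiff : Differentiable ℝ g)
    (hsc : ∀ x y, g x + ⟪gradient g x, y - x⟫ + lam / 2 * ‖y - x‖ ^ 2 ≤ g y)
    (X : Matrix (Fin n) (Fin d) ℝ)
    (hX : ∀ w : EuclideanSpace ℝ (Fin d), s * ‖w‖ ≤ ‖Matrix.toEuclideanLin X w‖)
    (b : Fin n → ℝ) (hb : ∀ j, c ≤ |b j|)
    (f : EuclideanSpace ℝ (Fin d) → ℝ)
    (hf : f = fun w => g (Matrix.toEuclideanLin (Matrix.diagonal b * X) w))
    (w wp : EuclideanSpace ℝ (Fin d)) (hwp : ∀ y, f wp ≤ f y) :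
    f w - ‖gradient f w‖ ^ 2 / (2 * lam * s ^ 2 * c ^ 2) ≤ f wp := by
  classical
  set A : EuclideanSpace ℝ (Fin d) →L[ℝ] EuclideanSpace ℝ (Fin n) :=
    LinearMap.toContinuousLinearMap (Matrix.toEuclideanLin (Matrix.diagonal b * X)) with hAdef
  have hfA : ∀ u, f u = g (A u) := by intro u; rw [hf]; rfl
  -- lower bound ‖A u‖ ≥ s * c * ‖u‖
  have hA : ∀ u : EuclideanSpace ℝ (Fin d), s * c * ‖u‖ ≤ ‖A u‖ := by
    intro u
    have h1 : c * ‖Matrix.toEuclideanLin X u‖ ≤ ‖A u‖ := by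
      have hle : (c * ‖Matrix.toEuclideanLin X u‖) ^ 2 ≤ ‖A u‖ ^ 2 := by
        rw [mul_pow]
        have hXu : ‖Matrix.toEuclideanLin X u‖ ^ 2 =
            ∑ i, (Matrix.toEuclideanLin X u i) ^ 2 := by
          rw [EuclideanSpace.norm_eq]
          rw [Real.sq_sqrt (by positivity)]
          simp [sq_abs]
        have hAu : ‖A u‖ ^ 2 = ∑ i, (A u i) ^ 2 := by
          rw [EuclideanSpace.norm_eq]
          rw [Real.sq_sqrt (by positivity)]
          simp [sq_abs]
        rw [hXu, hAu, Finset.mul_sum]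
        apply Finset.sum_le_sum
        intro i _
        have hAui : A u i = b i * (Matrix.toEuclideanLin X u i) := by
          simp only [hAdef, LinearMap.coe_toContinuousLinearMap',
            Matrix.toEuclideanLin_apply]
          rw [← Matrix.mulVec_mulVec]
          rw [Matrix.mulVec_diagonal]
        rw [hAui, mul_pow]
        have : c ^ 2 ≤ (b i) ^ 2 := by
          have := hb i
          nlinarith [abs_nonneg (b i), sq_abs (b i)]
        nlinarith [sq_nonneg (Matrix.toEuclideanLin X u i)]
      have h0 : 0 ≤ c * ‖Matrix.toEuclideanLin X u‖ := by positivity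
      nlinarith [norm_nonneg (A u)]
    calc s * c * ‖u‖ = c * (s * ‖u‖) := by ring
      _ ≤ c * ‖Matrix.toEuclideanLin X u‖ := by
          exact mul_le_mul_of_nonneg_left (hX u) hc.le
      _ ≤ ‖A u‖ := h1
  -- gradient of f
  have hgradf : gradient f w = (ContinuousLinearMap.adjoint A) (gradient g (A w)) := by
    have hg : HasGradientAt g (gradient g (A w)) (A w) :=
      (hdiff (A w)).hasGradientAt
    have hgf : HasFDerivAt g ((InnerProductSpace.toDual ℝ _) (gradient g (A w))) (A w) :=
      hg.hasFDerivAt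
    have hcomp : HasFDerivAt f
        (((InnerProductSpace.toDual ℝ _) (gradient g (A w))).comp A) w := by
      rw [funext hfA]
      exact hgf.comp w (A.hasFDerivAt (x := w))
    have heq : ((InnerProductSpace.toDual ℝ _) (gradient g (A w))).comp A =
        (InnerProductSpace.toDual ℝ _) ((ContinuousLinearMap.adjoint A) (gradient g (A w))) := by
      ext u
      simp [ContinuousLinearMap.adjoint_inner_left]
    rw [heq] at hcomp
    have h2 : HasGradientAt f ((ContinuousLinearMap.adjoint A) (gradient g (A w))) w := by
      simpa using hcomp.hasGradientAt
    exact h2.gradient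
  -- strong convexity applied at A w, A wp
  have key := hsc (A w) (A wp)
  have hmapsub : A wp - A w = A (wp - w) := (map_sub A wp w).symm
  have hinner : ⟪gradient g (A w), A (wp - w)⟫ = ⟪gradient f w, wp - w⟫ := by
    rw [hgradf, ContinuousLinearMap.adjoint_inner_left]
  rw [hmapsub, hinner] at key
  rw [hfA w, hfA wp]
  set G := ‖gradient f w‖ with hG
  set u := ‖wp - w‖ with hu
  have hnorm : s * c * u ≤ ‖A (wp - w)‖ := hA _
  have hCS : -(G * u) ≤ ⟪gradient f w, wp - w⟫ := by
    have := abs_real_inner_le_norm (gradient f w) (wp - w)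
    have h2 := neg_abs_le (⟪gradient f w, wp - w⟫ : ℝ)
    linarith [neg_le_neg this]
  have hsq : (s * c * u) ^ 2 ≤ ‖A (wp - w)‖ ^ 2 := by
    have h0 : 0 ≤ s * c * u := by positivity
    nlinarith [norm_nonneg (A (wp - w))]
  have hmu : 0 < lam * s ^ 2 * c ^ 2 := by positivity
  have hfinal : g (A w) - G ^ 2 / (2 * lam * s ^ 2 * c ^ 2) ≤
      g (A w) + ⟪gradient f w, wp - w⟫ + lam / 2 * ‖A (wp - w)‖ ^ 2 := by
    have hkey2 : lam / 2 * (s * c * u) ^ 2 ≤ lam / 2 * ‖A (wp - w)‖ ^ 2 :=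
      mul_le_mul_of_nonneg_left hsq (by positivity)
    have hq : 0 ≤ ⟪gradient f w, wp - w⟫ + lam / 2 * (s * c * u) ^ 2
        + G ^ 2 / (2 * lam * s ^ 2 * c ^ 2) := by
      have hsq2 : 0 ≤ (lam * s ^ 2 * c ^ 2 * u - G) ^ 2 := sq_nonneg _
      have hdiv : G ^ 2 / (2 * lam * s ^ 2 * c ^ 2) =
          G ^ 2 / (2 * (lam * s ^ 2 * c ^ 2)) := by ring_nf
      rw [hdiv]
      have expand : ⟪gradient f w, wp - w⟫ + lam / 2 * (s * c * u) ^ 2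
          + G ^ 2 / (2 * (lam * s ^ 2 * c ^ 2)) ≥
          -(G * u) + lam / 2 * (s * c * u) ^ 2
          + G ^ 2 / (2 * (lam * s ^ 2 * c ^ 2)) := by linarith
      have : -(G * u) + lam / 2 * (s * c * u) ^ 2
          + G ^ 2 / (2 * (lam * s ^ 2 * c ^ 2)) =
          (lam * s ^ 2 * c ^ 2 * u - G) ^ 2 / (2 * (lam * s ^ 2 * c ^ 2)) := by
        field_simp
        ring
      linarith [div_nonneg hsq2 (by positivity : (0:ℝ) ≤ 2 * (lam * s ^ 2 * c ^ 2)), expand]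
    linarith
  linarith
end

section
/- Let X be a real d × n matrix such that X·Xᵀ is invertible, and set X⁺ = Xᵀ·(X·Xᵀ)⁻¹. Then for every real k × d matrix W and every real k × n matrix Y, in Frobenius norm: ‖(XXᵀ)⁻¹X‖_F² · ‖(WX − Y)Xᵀ‖_F² ≥ ‖WX − Y‖_F² − ‖Y·X⁺·X − Y‖_F². -/
open Matrix

/-- The squared Frobenius norm of a real matrix: `‖A‖_F² = Σᵢⱼ Aᵢⱼ²`. -/
def frobSq {m n : Type*} [Fintype m] [Fintype n] (A : Matrix m n ℝ) : ℝ :=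
  ∑ i, ∑ j, (A i j) ^ 2

lemma frobSq_eq_trace {m n : Type*} [Fintype m] [Fintype n] (A : Matrix m n ℝ) :
    frobSq A = (A * Aᵀ).trace := by
  simp [frobSq, Matrix.trace, Matrix.mul_apply, Matrix.diag, sq]

lemma frobSq_mul_le {m p q : Type*} [Fintype m] [Fintype p] [Fintype q]
    (A : Matrix m p ℝ) (B : Matrix p q ℝ) :
    frobSq (A * B) ≤ frobSq A * frobSq B := by
  unfold frobSq
  calc ∑ i, ∑ j, ((A * B) i j) ^ 2
      ≤ ∑ i, ∑ j, (∑ l, (A i l) ^ 2) * (∑ l, (B l j) ^ 2) := by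
        refine Finset.sum_le_sum fun i _ => Finset.sum_le_sum fun j _ => ?_
        simpa [Matrix.mul_apply] using
          Finset.sum_mul_sq_le_sq_mul_sq Finset.univ (fun l => A i l) (fun l => B l j)
    _ = (∑ i, ∑ l, (A i l) ^ 2) * (∑ j, ∑ l, (B l j) ^ 2) := by
        rw [← Finset.sum_mul_sum]
    _ = (∑ i, ∑ j, (A i j) ^ 2) * (∑ i, ∑ j, (B i j) ^ 2) := by
        congr 1
        exact Finset.sum_comm

lemma pyth {k n : Type*} [Fintype k] [Fintype n] (E : Matrix k n ℝ) (P : Matrix n n ℝ)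
    (hPt : Pᵀ = P) (hP2 : P * P = P) :
    frobSq E - frobSq (E - E * P) = frobSq (E * P) := by
  have h1 : (E - E * P) * (E - E * P)ᵀ = E * Eᵀ - (E * P) * (E * P)ᵀ := by
    have : (E * P) * (E * P)ᵀ = E * P * Eᵀ := by
      rw [transpose_mul, hPt, ← Matrix.mul_assoc, Matrix.mul_assoc E P P, hP2]
    rw [this, transpose_sub, transpose_mul, hPt, Matrix.sub_mul, Matrix.mul_sub,
      Matrix.mul_sub, ← Matrix.mul_assoc, ← Matrix.mul_assoc,
      Matrix.mul_assoc (E * P) P Eᵀ]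
    rw [Matrix.mul_assoc E P (P * Eᵀ), ← Matrix.mul_assoc P P Eᵀ, hP2, ← Matrix.mul_assoc]
    abel
  rw [frobSq_eq_trace, frobSq_eq_trace, frobSq_eq_trace, h1, trace_sub]
  ring

/-- **Projection bound.** If `XXᵀ` is invertible and `X⁺ = Xᵀ(XXᵀ)⁻¹`, then for all `W, Y`,
`‖(XXᵀ)⁻¹X‖_F² · ‖(WX − Y)Xᵀ‖_F² ≥ ‖WX − Y‖_F² − ‖YX⁺X − Y‖_F²` (Frobenius norms). -/
theorem projection_bound (d n k : ℕ) (X : Matrix (Fin d) (Fin n) ℝ)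
    (hX : IsUnit (X * Xᵀ).det)
    (Xp : Matrix (Fin n) (Fin d) ℝ) (hXp : Xp = Xᵀ * (X * Xᵀ)⁻¹)
    (W : Matrix (Fin k) (Fin d) ℝ) (Y : Matrix (Fin k) (Fin n) ℝ) :
    frobSq (W * X - Y) - frobSq (Y * Xp * X - Y) ≤
      frobSq ((X * Xᵀ)⁻¹ * X) * frobSq ((W * X - Y) * Xᵀ) := by
  set M := (X * Xᵀ)⁻¹ with hM
  set P := Xp * X with hP
  set E := W * X - Y with hEdef
  have hinv : X * Xᵀ * M = 1 := Matrix.mul_nonsing_inv _ hX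
  have hMt : Mᵀ = M := by
    rw [hM, Matrix.transpose_nonsing_inv, transpose_mul, transpose_transpose]
  have hPexp : P = Xᵀ * M * X := by rw [hP, hXp]
  have hPt : Pᵀ = P := by
    rw [hPexp, transpose_mul, transpose_mul, hMt, transpose_transpose, Matrix.mul_assoc]
  have hXP : X * P = X := by
    rw [hPexp, ← Matrix.mul_assoc, ← Matrix.mul_assoc, hinv, Matrix.one_mul]
  have hP2 : P * P = P := by
    calc P * P = Xp * X * P := by rw [← hP]
      _ = Xp * (X * P) := Matrix.mul_assoc _ _ _
      _ = Xp * X := by rw [hXP]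
      _ = P := hP.symm
  have hE : E - E * P = Y * Xp * X - Y := by
    rw [hEdef, Matrix.sub_mul, Matrix.mul_assoc, hXP, Matrix.mul_assoc, ← hP]
    abel
  have hEP : E * P = (E * Xᵀ) * (M * X) := by
    rw [hPexp, Matrix.mul_assoc, Matrix.mul_assoc]
  have := pyth E P hPt hP2
  rw [hE] at this
  rw [this, hEP]
  calc frobSq ((E * Xᵀ) * (M * X)) ≤ frobSq (E * Xᵀ) * frobSq (M * X) := frobSq_mul_le _ _
    _ = frobSq (M * X) * frobSq (E * Xᵀ) := mul_comm _ _
end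

section
/- Let W₁,…,W_ℓ be real d × d matrices each satisfying ‖Wⱼ·v‖ ≥ τ·‖v‖ for all v ∈ ℝ^d (smallest singular value at least τ > 0), let X be a real d × n matrix and Y a real d × n matrix. Set W = W_ℓ·W_{ℓ−1}···W₁ and E = (W·X − Y)·Xᵀ. Then Σ_{j=1}^{ℓ} ‖W_{j+1}ᵀ···W_ℓᵀ · E · W₁ᵀ···W_{j−1}ᵀ‖_F² ≥ ℓ·τ^{2ℓ−2}·‖E‖_F², where for j = ℓ the left factor is E itself and for j = 1 the right factor is E itself. (The j-th summand is the Frobenius norm of the partial derivative of f(W₁,…,W_ℓ) = ½‖W_ℓ···W₁X − Y‖_F² with respect to Wⱼ.) -/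
open Matrix

/-- Prefix product: `prefixProd W k = W_{k-1} ⬝ W_{k-2} ⬝ ⋯ ⬝ W_0` (and `1` for `k = 0`). -/
def prefixProd {d l : ℕ} (W : Fin l → Matrix (Fin d) (Fin d) ℝ) : ℕ → Matrix (Fin d) (Fin d) ℝ
  | 0 => 1
  | k + 1 => (if h : k < l then W ⟨k, h⟩ else 1) * prefixProd W k

/-- Suffix product of the last `m` factors:
`suffixProd W m = W_{l-1} ⬝ W_{l-2} ⬝ ⋯ ⬝ W_{l-m}` (and `1` for `m = 0`). -/
def suffixProd {d l : ℕ} (W : Fin l → Matrix (Fin d) (Fin d) ℝ) : ℕ → Matrix (Fin d) (Fin d) ℝ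
  | 0 => 1
  | m + 1 => suffixProd W m * (if h : l - 1 - m < l then W ⟨l - 1 - m, h⟩ else 1)

/-!
The `j`-th summand is `Sᵀ E Pᵀ`, where `S` is the product of the layers above `Wⱼ` and `P` the
product of those below it. Lower bounds on singular values multiply along products and survive
transposition (for a square matrix, injectivity gives surjectivity, and `Mᵀ` is the adjoint of
`M`); a lower bound `σ` on `M` gives `‖M A‖_F ≥ σ ‖A‖_F` column by column. So every summand is at
least `τ^(2(ℓ-1)) ‖E‖_F²`, and there are `ℓ` of them.
-/

section FrobeniusNorm

variable {ι κ m n : Type*} [Fintype ι] [Fintype κ] [Fintype m] [Fintype n]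

lemma frobSq_transpose (A : Matrix m n ℝ) : frobSq Aᵀ = frobSq A :=
  Finset.sum_comm

lemma frobSq_eq_sum_norm_sq_col (A : Matrix m n ℝ) :
    frobSq A = ∑ j, ‖WithLp.toLp 2 (Aᵀ j)‖ ^ 2 := by
  rw [← frobSq_transpose]
  simp only [frobSq, EuclideanSpace.real_norm_sq_eq]

variable [DecidableEq ι] [DecidableEq κ]

/-- `τ` bounds the singular values of `M` from below. -/
def Matrix.BoundedBelowBy (τ : ℝ) (M : Matrix ι ι ℝ) : Prop :=
  ∀ v : EuclideanSpace ℝ ι, τ * ‖v‖ ≤ ‖toEuclideanLin M v‖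

namespace Matrix.BoundedBelowBy

lemma one : BoundedBelowBy 1 (1 : Matrix ι ι ℝ) := fun v => by simp

lemma mul {a b : ℝ} {A B : Matrix ι ι ℝ} (hA : BoundedBelowBy a A) (hB : BoundedBelowBy b B)
    (ha : 0 ≤ a) : BoundedBelowBy (a * b) (A * B) := fun v =>
  calc a * b * ‖v‖ = a * (b * ‖v‖) := mul_assoc ..
    _ ≤ a * ‖toEuclideanLin B v‖ := mul_le_mul_of_nonneg_left (hB v) ha
    _ ≤ ‖toEuclideanLin A (toEuclideanLin B v)‖ := hA _
    _ = ‖toEuclideanLin (A * B) v‖ := by simp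

lemma transpose {τ : ℝ} {M : Matrix ι ι ℝ} (hM : BoundedBelowBy τ M) :
    BoundedBelowBy τ Mᵀ := by
  intro w
  rcases le_or_gt τ 0 with hτ | hτ
  · exact (mul_nonpos_of_nonpos_of_nonneg hτ (norm_nonneg w)).trans (norm_nonneg _)
  have hinj : Function.Injective (toEuclideanLin M) := by
    refine (injective_iff_map_eq_zero _).2 fun v hv => norm_le_zero_iff.1 ?_
    have := hM v
    rw [hv, norm_zero] at this
    exact nonpos_of_mul_nonpos_right this hτ
  obtain ⟨u, rfl⟩ := LinearMap.injective_iff_surjective.1 hinj w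
  have hadj : ‖toEuclideanLin M u‖ ^ 2 ≤ ‖toEuclideanLin Mᵀ (toEuclideanLin M u)‖ * ‖u‖ := by
    rw [← real_inner_self_eq_norm_sq, ← LinearMap.adjoint_inner_left,
      ← toEuclideanLin_conjTranspose_eq_adjoint, conjTranspose_eq_transpose_of_trivial]
    exact real_inner_le_norm _ _
  rcases (norm_nonneg (toEuclideanLin M u)).eq_or_lt with h0 | hpos
  · rw [← h0, mul_zero]
    exact norm_nonneg _
  refine le_of_mul_le_mul_right ?_ hpos
  calc τ * ‖toEuclideanLin M u‖ * ‖toEuclideanLin M u‖ = τ * ‖toEuclideanLin M u‖ ^ 2 := by ring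
    _ ≤ τ * (‖toEuclideanLin Mᵀ (toEuclideanLin M u)‖ * ‖u‖) :=
      mul_le_mul_of_nonneg_left hadj hτ.le
    _ = ‖toEuclideanLin Mᵀ (toEuclideanLin M u)‖ * (τ * ‖u‖) := by ring
    _ ≤ ‖toEuclideanLin Mᵀ (toEuclideanLin M u)‖ * ‖toEuclideanLin M u‖ :=
      mul_le_mul_of_nonneg_left (hM u) (norm_nonneg _)

lemma frobSq_mul_left {τ : ℝ} {M : Matrix ι ι ℝ} (hM : BoundedBelowBy τ M) (hτ : 0 ≤ τ)
    (A : Matrix ι n ℝ) : τ ^ 2 * frobSq A ≤ frobSq (M * A) := by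
  rw [frobSq_eq_sum_norm_sq_col, frobSq_eq_sum_norm_sq_col, Finset.mul_sum]
  refine Finset.sum_le_sum fun j _ => ?_
  have hcol : WithLp.toLp 2 ((M * A)ᵀ j) = toEuclideanLin M (WithLp.toLp 2 (Aᵀ j)) := by
    ext i; simp [mulVec, dotProduct, mul_apply]
  rw [hcol, ← mul_pow]
  exact pow_le_pow_left₀ (by positivity) (hM _) 2

lemma frobSq_mul_right {τ : ℝ} {M : Matrix ι ι ℝ} (hM : BoundedBelowBy τ Mᵀ) (hτ : 0 ≤ τ)
    (A : Matrix m ι ℝ) : τ ^ 2 * frobSq A ≤ frobSq (A * M) := by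
  calc τ ^ 2 * frobSq A = τ ^ 2 * frobSq Aᵀ := by rw [frobSq_transpose]
    _ ≤ frobSq (Mᵀ * Aᵀ) := hM.frobSq_mul_left hτ Aᵀ
    _ = frobSq (A * M) := by rw [← transpose_mul, frobSq_transpose]

lemma frobSq_transpose_mul_mul_transpose {a b : ℝ} {S : Matrix ι ι ℝ} {P : Matrix κ κ ℝ}
    (hS : BoundedBelowBy a S) (hP : BoundedBelowBy b P) (ha : 0 ≤ a) (hb : 0 ≤ b)
    (E : Matrix ι κ ℝ) : (a * b) ^ 2 * frobSq E ≤ frobSq (Sᵀ * E * Pᵀ) :=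
  calc (a * b) ^ 2 * frobSq E = a ^ 2 * (b ^ 2 * frobSq E) := by ring
    _ ≤ a ^ 2 * frobSq (E * Pᵀ) :=
      mul_le_mul_of_nonneg_left ((hP : BoundedBelowBy b Pᵀᵀ).frobSq_mul_right hb E) (sq_nonneg a)
    _ ≤ frobSq (Sᵀ * (E * Pᵀ)) := hS.transpose.frobSq_mul_left ha _
    _ = frobSq (Sᵀ * E * Pᵀ) := by rw [Matrix.mul_assoc]

end Matrix.BoundedBelowBy

end FrobeniusNorm

section LayerProducts

variable {d l : ℕ} {τ : ℝ} {W : Fin l → Matrix (Fin d) (Fin d) ℝ}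

lemma boundedBelowBy_prefixProd (hW : ∀ j, (W j).BoundedBelowBy τ) (hτ : 0 ≤ τ) {k : ℕ}
    (hk : k ≤ l) : (prefixProd W k).BoundedBelowBy (τ ^ k) := by
  induction k with
  | zero => simpa [prefixProd] using Matrix.BoundedBelowBy.one
  | succ k ih =>
    rw [prefixProd, dif_pos (by omega), pow_succ']
    exact (hW _).mul (ih (by omega)) hτ

lemma boundedBelowBy_suffixProd (hW : ∀ j, (W j).BoundedBelowBy τ) (hτ : 0 ≤ τ) {m : ℕ}
    (hm : m ≤ l) : (suffixProd W m).BoundedBelowBy (τ ^ m) := by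
  induction m with
  | zero => simpa [suffixProd] using Matrix.BoundedBelowBy.one
  | succ m ih =>
    rw [suffixProd, dif_pos (by omega), pow_succ]
    exact (ih (by omega)).mul (hW _) (pow_nonneg hτ m)

end LayerProducts

theorem deep_linear_gradient_bound_general (l d : ℕ) (τ : ℝ) (hτ : 0 < τ)
    (W : Fin l → Matrix (Fin d) (Fin d) ℝ)
    (hW : ∀ (j : Fin l) (v : EuclideanSpace ℝ (Fin d)),
      τ * ‖v‖ ≤ ‖Matrix.toEuclideanLin (W j) v‖)
    (E : Matrix (Fin d) (Fin d) ℝ) :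
    (l : ℝ) * τ ^ (2 * l - 2) * frobSq E ≤
      ∑ j : Fin l,
        frobSq ((suffixProd W (l - ((j : ℕ) + 1)))ᵀ * E * (prefixProd W (j : ℕ))ᵀ) := by
  have hsummand (j : Fin l) : τ ^ (2 * l - 2) * frobSq E ≤
      frobSq ((suffixProd W (l - ((j : ℕ) + 1)))ᵀ * E * (prefixProd W (j : ℕ))ᵀ) := by
    rw [show 2 * l - 2 = 2 * ((l - ((j : ℕ) + 1)) + j) by omega, pow_mul', pow_add]
    exact (boundedBelowBy_suffixProd hW hτ.le (by omega)).frobSq_transpose_mul_mul_transpose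
      (boundedBelowBy_prefixProd hW hτ.le j.is_le') (by positivity) (by positivity) E
  calc (l : ℝ) * τ ^ (2 * l - 2) * frobSq E = ∑ _j : Fin l, τ ^ (2 * l - 2) * frobSq E := by
        simp [mul_assoc]
    _ ≤ _ := Finset.sum_le_sum fun j _ => hsummand j

/-- **Gradient lower bound for deep linear networks.** If each `Wⱼ` has smallest singular
value at least `τ > 0`, `W = W_ℓ ⋯ W₁` and `E = (WX − Y)Xᵀ`, then the sum over `j` of the
squared Frobenius norms of `W_{j+1}ᵀ⋯W_ℓᵀ · E · W₁ᵀ⋯W_{j-1}ᵀ` (the partial derivatives of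
`½‖W_ℓ⋯W₁X − Y‖_F²`) is at least `ℓ·τ^{2ℓ−2}·‖E‖_F²`. -/
theorem deep_linear_gradient_bound (l d n : ℕ) (hl : 1 ≤ l) (τ : ℝ) (hτ : 0 < τ)
    (W : Fin l → Matrix (Fin d) (Fin d) ℝ)
    (hW : ∀ (j : Fin l) (v : EuclideanSpace ℝ (Fin d)),
      τ * ‖v‖ ≤ ‖Matrix.toEuclideanLin (W j) v‖)
    (X Y : Matrix (Fin d) (Fin n) ℝ)
    (E : Matrix (Fin d) (Fin d) ℝ)
    (hE : E = (prefixProd W l * X - Y) * Xᵀ) :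
    (l : ℝ) * τ ^ (2 * l - 2) * frobSq E ≤
      ∑ j : Fin l,
        frobSq ((suffixProd W (l - ((j : ℕ) + 1)))ᵀ * E * (prefixProd W (j : ℕ))ᵀ) :=
  deep_linear_gradient_bound_general l d τ hτ W hW E
end
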